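/- arXiv:2605.13875 — 10 statements merged into one kernel-verified Lean document; each statement's English description precedes it below -/
import Mathlib

section
/- Let N ≥ 2, let π₀ lie in the interior of the probability simplex in ℝ^N, let τ > 0 and q̄ ∈ ℝ^N. Define Φ(π) = ⟨π, q̄⟩ − τ·KL(π‖π₀) − ψ(π) on the interior of the simplex, where ψ(π) = max(0, max_{i∈[N]} (−τ·log(π_i/(π₀)_i))). Then Φ tends to −∞ at the boundary of the simplex: for every sequence (π^{(k)}) in the interior of the simplex with min_{i∈[N]} π^{(k)}_i → 0 as k → ∞, one has Φ(π^{(k)}) → −∞. -/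
open Finset

/-- Kullback–Leibler divergence between two vectors in the interior of the simplex. -/
noncomputable def KL {N : ℕ} (π π₀ : Fin N → ℝ) : ℝ :=
  ∑ i, π i * Real.log (π i / π₀ i)

/-- Minimal implementation cost `ψ(π) = max(0, max_i (−τ log(π_i/(π₀)_i)))`. -/
noncomputable def psi {N : ℕ} (τ : ℝ) (π₀ π : Fin N → ℝ) : ℝ :=
  max 0 (⨆ i, -τ * Real.log (π i / π₀ i))

/-- The aggregate-surplus potential `Φ(π) = ⟨π, q̄⟩ − τ·KL(π‖π₀) − ψ(π)`. -/
noncomputable def Phi {N : ℕ} (τ : ℝ) (π₀ qbar π : Fin N → ℝ) : ℝ :=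
  (∑ i, π i * qbar i) - τ * KL π π₀ - psi τ π₀ π

/-!
On the open simplex each term of `Φ` is bounded separately: `⟨π, q̄⟩ ≤ ∑ᵢ |q̄ᵢ|`,
`KL(π‖π₀) ≥ ∑ᵢ πᵢ − ∑ᵢ (π₀)ᵢ` (termwise this is `x log x + 1 − x ≥ 0` at `x = πᵢ/(π₀)ᵢ`),
and `ψ(π) ≥ τ log((π₀)ⱼ / πⱼ)` at a coordinate `j` where `π` is minimal. Hence
`Φ(π) ≤ C + τ log (minᵢ πᵢ)` for a constant `C`, and the right-hand side tends to `−∞`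
as `minᵢ πᵢ → 0`.
-/

open Filter InformationTheory

lemma nonempty_of_sum_eq_one {ι : Type*} [Fintype ι] {f : ι → ℝ} (h : ∑ i, f i = 1) :
    Nonempty ι :=
  univ_nonempty_iff.mp (nonempty_of_sum_ne_zero (h ▸ one_ne_zero))

lemma iInf_pos_of_pos {ι : Type*} [Finite ι] [Nonempty ι] {f : ι → ℝ} (hf : ∀ i, 0 < f i) :
    0 < ⨅ i, f i := by
  obtain ⟨i, hi⟩ := exists_eq_ciInf_of_finite (f := f)
  exact hi ▸ hf i

lemma sum_mul_le_sum_abs {ι : Type*} [Fintype ι] {π q : ι → ℝ} (hπ : ∀ i, 0 ≤ π i)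
    (hsum : ∑ i, π i = 1) : ∑ i, π i * q i ≤ ∑ i, |q i| := by
  refine sum_le_sum fun i _ => ?_
  have hle : π i ≤ 1 := hsum ▸ single_le_sum (fun j _ => hπ j) (mem_univ i)
  calc π i * q i ≤ π i * |q i| := mul_le_mul_of_nonneg_left (le_abs_self _) (hπ i)
    _ ≤ |q i| := mul_le_of_le_one_left (abs_nonneg _) hle

lemma sum_sub_sum_le_KL {N : ℕ} {π π₀ : Fin N → ℝ} (hπ : ∀ i, 0 ≤ π i)
    (hπ₀ : ∀ i, 0 < π₀ i) : ∑ i, π i - ∑ i, π₀ i ≤ KL π π₀ := by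
  rw [← sum_sub_distrib]
  refine sum_le_sum fun i _ => ?_
  have hkl : π i * Real.log (π i / π₀ i) - (π i - π₀ i) = π₀ i * klFun (π i / π₀ i) := by
    have hπ₀i := (hπ₀ i).ne'
    rw [klFun_apply]
    field_simp
    ring
  have hpos := mul_nonneg (hπ₀ i).le (klFun_nonneg (div_nonneg (hπ i) (hπ₀ i).le))
  linarith

lemma neg_psi_le {N : ℕ} (τ : ℝ) (π₀ π : Fin N → ℝ) (j : Fin N) :
    -psi τ π₀ π ≤ τ * Real.log (π j / π₀ j) := by
  have hle : -τ * Real.log (π j / π₀ j) ≤ psi τ π₀ π :=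
    (le_ciSup (Finite.bddAbove_range fun i => -τ * Real.log (π i / π₀ i)) j).trans
      (le_max_right _ _)
  linarith

theorem Phi_le_log_iInf {N : ℕ} {τ : ℝ} (hτ : 0 ≤ τ) {π₀ π : Fin N → ℝ} (qbar : Fin N → ℝ)
    (hπ₀ : ∀ i, 0 < π₀ i) (hπ : ∀ i, 0 < π i) (hsum : ∑ i, π i = 1) :
    Phi τ π₀ qbar π ≤
      ∑ i, |qbar i| + τ * (∑ i, π₀ i - 1) - τ * Real.log (⨅ i, π₀ i) + τ * Real.log (⨅ i, π i) := by
  have : Nonempty (Fin N) := nonempty_of_sum_eq_one hsum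
  obtain ⟨j, hj⟩ := exists_eq_ciInf_of_finite (f := π)
  have hlog : Real.log (π j / π₀ j) ≤ Real.log (⨅ i, π i) - Real.log (⨅ i, π₀ i) := by
    rw [Real.log_div (hπ j).ne' (hπ₀ j).ne', hj]
    gcongr
    exacts [iInf_pos_of_pos hπ₀, ciInf_le (Finite.bddBelow_range π₀) j]
  have hKL := sum_sub_sum_le_KL (fun i => (hπ i).le) hπ₀
  rw [hsum] at hKL
  have hq := sum_mul_le_sum_abs (q := qbar) (fun i => (hπ i).le) hsum
  have hψ := neg_psi_le τ π₀ π j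
  unfold Phi
  linarith [mul_le_mul_of_nonneg_left hlog hτ, mul_le_mul_of_nonneg_left hKL hτ]

theorem stmt_2_general (N : ℕ) (π₀ : Fin N → ℝ)
    (hπ₀pos : ∀ i, 0 < π₀ i)
    (τ : ℝ) (hτ : 0 < τ) (qbar : Fin N → ℝ)
    (πk : ℕ → Fin N → ℝ)
    (hmem : ∀ k, (∀ i, 0 < πk k i) ∧ ∑ i, πk k i = 1)
    (hmin : Filter.Tendsto (fun k => ⨅ i, πk k i) Filter.atTop (nhds 0)) :
    Filter.Tendsto (fun k => Phi τ π₀ qbar (πk k)) Filter.atTop Filter.atBot := by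
  have : Nonempty (Fin N) := nonempty_of_sum_eq_one (hmem 0).2
  have hmin' : Tendsto (fun k => ⨅ i, πk k i) atTop (nhdsWithin 0 (Set.Ioi 0)) :=
    tendsto_nhdsWithin_of_tendsto_nhds_of_eventually_within _ hmin
      (Eventually.of_forall fun k => iInf_pos_of_pos (hmem k).1)
  have hlog := (Real.tendsto_log_nhdsGT_zero.comp hmin').const_mul_atBot hτ
  exact tendsto_atBot_mono (fun k => Phi_le_log_iInf hτ.le qbar hπ₀pos (hmem k).1 (hmem k).2)
    (tendsto_atBot_add_const_left _ _ hlog)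

/-- `Φ` tends to `−∞` at the boundary of the simplex: along any sequence in the
interior of the simplex whose minimal coordinate tends to `0`, `Φ` tends to `−∞`. -/
theorem stmt_2 (N : ℕ) (hN : 2 ≤ N) (π₀ : Fin N → ℝ)
    (hπ₀pos : ∀ i, 0 < π₀ i) (hπ₀sum : ∑ i, π₀ i = 1)
    (τ : ℝ) (hτ : 0 < τ) (qbar : Fin N → ℝ)
    (πk : ℕ → Fin N → ℝ)
    (hmem : ∀ k, (∀ i, 0 < πk k i) ∧ ∑ i, πk k i = 1)
    (hmin : Filter.Tendsto (fun k => ⨅ i, πk k i) Filter.atTop (nhds 0)) :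
    Filter.Tendsto (fun k => Phi τ π₀ qbar (πk k)) Filter.atTop Filter.atBot :=
  stmt_2_general N π₀ hπ₀pos τ hτ qbar πk hmem hmin
end

section
/- Let N ≥ 2, let π₀ lie in the interior of the probability simplex in ℝ^N, let τ > 0 and q̄ ∈ ℝ^N. Define Φ(π) = ⟨π, q̄⟩ − τ·KL(π‖π₀) − ψ(π) on the interior of the simplex, where ψ(π) = max(0, max_{i∈[N]} (−τ·log(π_i/(π₀)_i))). Then there exists a unique π* in the interior of the simplex such that Φ(π*) ≥ Φ(π) for all π in the interior of the simplex. -/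
open Finset

/-!
`Φ` is strictly concave on the positive orthant: up to the convex `ψ` (a maximum of convex
functions) it is the separable sum of the strictly concave `t ↦ t (q̄ᵢ + τ log π₀ᵢ) − τ t log t`.
Hence it has at most one maximizer on the open simplex, and it is continuous there.

For existence, Gibbs' inequality and `ψ π ≥ −τ log (πⱼ / π₀ⱼ)` give
`Φ π ≤ max q̄ + τ log (πⱼ / π₀ⱼ)`, so `Φ π ≤ Φ π₀` as soon as `πⱼ < δ π₀ⱼ` for some `j`, for a
suitable `δ ∈ (0, 1]`. The maximum of `Φ` on the compact set `{π ∈ Δ | δ π₀ ≤ π}` is thus global.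
-/

theorem StrictConvexOn.const_mul {E : Type*} [AddCommMonoid E] [Module ℝ E] {s : Set E}
    {f : E → ℝ} {c : ℝ} (hc : 0 < c) (hf : StrictConvexOn ℝ s f) :
    StrictConvexOn ℝ s fun x => c * f x :=
  ⟨hf.1, fun x hx y hy hxy a b ha hb hab => by
    calc c * f (a • x + b • y) < c * (a • f x + b • f y) :=
          mul_lt_mul_of_pos_left (hf.2 hx hy hxy ha hb hab) hc
      _ = a • (c * f x) + b • (c * f y) := by simp only [smul_eq_mul]; ring⟩

theorem strictConcaveOn_univ_pi_sum {𝕜 ι β : Type*} {E : ι → Type*} [Fintype ι]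
    [Semiring 𝕜] [PartialOrder 𝕜] [∀ i, AddCommMonoid (E i)] [∀ i, Module 𝕜 (E i)]
    [AddCommMonoid β] [PartialOrder β] [IsOrderedCancelAddMonoid β] [Module 𝕜 β]
    {s : ∀ i, Set (E i)} {f : ∀ i, E i → β} (hf : ∀ i, StrictConcaveOn 𝕜 (s i) (f i)) :
    StrictConcaveOn 𝕜 (Set.univ.pi s) fun x => ∑ i, f i (x i) := by
  refine ⟨convex_pi fun i _ => (hf i).1, fun x hx y hy hxy a b ha hb hab => ?_⟩
  obtain ⟨j, hj⟩ := Function.ne_iff.1 hxy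
  simp only [Pi.add_apply, Pi.smul_apply, Finset.smul_sum, ← Finset.sum_add_distrib]
  exact Finset.sum_lt_sum
    (fun i _ => (hf i).concaveOn.2 (hx i trivial) (hy i trivial) ha.le hb.le hab)
    ⟨j, Finset.mem_univ j, (hf j).2 (hx j trivial) (hy j trivial) hj ha hb hab⟩

theorem ConvexOn.ciSup {E ι : Type*} [AddCommMonoid E] [Module ℝ E] [Finite ι] [Nonempty ι]
    {s : Set E} {f : ι → E → ℝ} (hf : ∀ i, ConvexOn ℝ s (f i)) :
    ConvexOn ℝ s fun x => ⨆ i, f i x := by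
  refine ⟨(hf (Classical.arbitrary ι)).1, fun x hx y hy a b ha hb hab => ciSup_le fun i => ?_⟩
  have hle (z : E) : f i z ≤ ⨆ j, f j z :=
    le_ciSup (f := fun j => f j z) (Finite.bddAbove_range _) i
  calc f i (a • x + b • y) ≤ a • f i x + b • f i y := (hf i).2 hx hy ha hb hab
    _ ≤ a • (⨆ j, f j x) + b • ⨆ j, f j y := by
      gcongr
      exacts [hle x, hle y]

theorem IsCompact.exists_isMaxOn_of_forall_diff_le {α β : Type*} [TopologicalSpace α]
    [LinearOrder β] [TopologicalSpace β] [ClosedIciTopology β] {f : α → β} {s K : Set α} {x₀ : α}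
    (hK : IsCompact K) (hf : ContinuousOn f K) (hx₀ : x₀ ∈ K)
    (hout : ∀ x ∈ s \ K, f x ≤ f x₀) : ∃ x ∈ K, IsMaxOn f s x := by
  obtain ⟨x, hxK, hmax⟩ := hK.exists_isMaxOn ⟨x₀, hx₀⟩ hf
  refine ⟨x, hxK, fun y hy => ?_⟩
  by_cases hyK : y ∈ K
  · exact hmax hyK
  · exact (hout y ⟨hy, hyK⟩).trans (hmax hx₀)

theorem strictConcaveOn_mul_sub_mul_mul_log (a : ℝ) {τ : ℝ} (hτ : 0 < τ) :
    StrictConcaveOn ℝ (Set.Ici 0) fun t => t * a - τ * (t * Real.log t) :=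
  (LinearMap.concaveOn (LinearMap.mulRight ℝ a) (convex_Ici 0)).sub_strictConvexOn
    (Real.strictConvexOn_mul_log.const_mul hτ)

theorem convexOn_neg_mul_log_div {τ c : ℝ} (hτ : 0 ≤ τ) (hc : 0 < c) :
    ConvexOn ℝ (Set.Ioi 0) fun t => -τ * Real.log (t / c) := by
  refine ((strictConcaveOn_log_Ioi.concaveOn.neg.smul hτ).add_const (τ * Real.log c)).congr
    fun t ht => ?_
  simp only [Pi.add_apply, Pi.neg_apply, smul_eq_mul, Real.log_div (ne_of_gt ht) hc.ne']
  ring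

def openStdSimplex (ι : Type*) [Fintype ι] : Set (ι → ℝ) :=
  {π | (∀ i, 0 < π i) ∧ ∑ i, π i = 1}

theorem openStdSimplex_subset_pi {ι : Type*} [Fintype ι] :
    openStdSimplex ι ⊆ Set.univ.pi fun _ => Set.Ioi 0 :=
  fun _ hπ i _ => hπ.1 i

theorem convex_openStdSimplex {ι : Type*} [Fintype ι] : Convex ℝ (openStdSimplex ι) := by
  have h : openStdSimplex ι = (Set.univ.pi fun _ => Set.Ioi 0) ∩ stdSimplex ℝ ι := by
    ext π
    simp only [openStdSimplex, stdSimplex, Set.mem_ofPred_eq, Set.mem_inter_iff, Set.mem_univ_pi,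
      Set.mem_Ioi]
    exact ⟨fun h => ⟨h.1, fun i => (h.1 i).le, h.2⟩, fun h => ⟨h.1, h.2.2⟩⟩
  rw [h]
  exact (convex_pi fun _ _ => convex_Ioi 0).inter (convex_stdSimplex ℝ ι)

section Potential

variable {N : ℕ} {τ : ℝ} {π₀ qbar π : Fin N → ℝ}

theorem KL_nonneg (hπ₀ : ∀ i, 0 < π₀ i) (hπ : ∀ i, 0 < π i) (hs : ∑ i, π i = ∑ i, π₀ i) :
    0 ≤ KL π π₀ := by
  have hterm : ∀ i, π i - π₀ i ≤ π i * Real.log (π i / π₀ i) := fun i => by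
    have := mul_le_mul_of_nonneg_left (Real.one_sub_inv_le_log_of_pos (div_pos (hπ i) (hπ₀ i)))
      (hπ i).le
    rwa [inv_div, mul_sub, mul_one, mul_div_cancel₀ _ (hπ i).ne'] at this
  calc 0 = ∑ i, (π i - π₀ i) := by rw [Finset.sum_sub_distrib, hs, sub_self]
    _ ≤ KL π π₀ := Finset.sum_le_sum fun i _ => hterm i

theorem neg_mul_log_div_le_psi (i : Fin N) : -τ * Real.log (π i / π₀ i) ≤ psi τ π₀ π :=
  le_max_of_le_right <|
    le_ciSup (f := fun i => -τ * Real.log (π i / π₀ i)) (Finite.bddAbove_range _) i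

theorem convexOn_psi [Nonempty (Fin N)] (hτ : 0 ≤ τ) (hπ₀ : ∀ i, 0 < π₀ i) :
    ConvexOn ℝ (Set.univ.pi fun _ => Set.Ioi 0) (psi τ π₀) := by
  have hP : Convex ℝ (Set.univ.pi fun (_ : Fin N) => Set.Ioi (0 : ℝ)) :=
    convex_pi fun _ _ => convex_Ioi 0
  have hterm (i : Fin N) : ConvexOn ℝ (Set.univ.pi fun _ => Set.Ioi 0)
      fun π : Fin N → ℝ => -τ * Real.log (π i / π₀ i) := by
    refine ((convexOn_neg_mul_log_div hτ (hπ₀ i)).comp_linearMap (LinearMap.proj i)).subset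
      (fun π hπ => ?_) hP
    exact hπ i (Set.mem_univ i)
  exact (convexOn_const 0 hP).sup (ConvexOn.ciSup hterm)

theorem Phi_eqOn_sum_sub_psi (hπ₀ : ∀ i, 0 < π₀ i) :
    Set.EqOn (fun π => ∑ i, (π i * (qbar i + τ * Real.log (π₀ i)) - τ * (π i * Real.log (π i)))
      - psi τ π₀ π) (Phi τ π₀ qbar) (Set.univ.pi fun _ => Set.Ioi 0) := fun π hπ => by
  simp only [Phi, KL, Finset.mul_sum, ← Finset.sum_sub_distrib]
  congr 1
  refine Finset.sum_congr rfl fun i _ => ?_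
  rw [Real.log_div (hπ i trivial).ne' (hπ₀ i).ne']
  ring

theorem strictConcaveOn_Phi [Nonempty (Fin N)] (hτ : 0 < τ) (hπ₀ : ∀ i, 0 < π₀ i) :
    StrictConcaveOn ℝ (Set.univ.pi fun _ => Set.Ioi 0) (Phi τ π₀ qbar) :=
  ((strictConcaveOn_univ_pi_sum fun i => (strictConcaveOn_mul_sub_mul_mul_log
    (qbar i + τ * Real.log (π₀ i)) hτ).subset Set.Ioi_subset_Ici_self (convex_Ioi 0)).sub_convexOn
    (convexOn_psi hτ.le hπ₀)).congr (Phi_eqOn_sum_sub_psi hπ₀)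

theorem Phi_le_sup'_add_log [Nonempty (Fin N)] (hτ : 0 ≤ τ) (hπ₀ : ∀ i, 0 < π₀ i)
    (hπ₀s : ∑ i, π₀ i = 1) (hπ : π ∈ openStdSimplex (Fin N)) (j : Fin N) :
    Phi τ π₀ qbar π ≤ univ.sup' univ_nonempty qbar + τ * Real.log (π j / π₀ j) := by
  set M := univ.sup' univ_nonempty qbar
  have hlin : ∑ i, π i * qbar i ≤ M := calc
    ∑ i, π i * qbar i ≤ ∑ i, π i * M := Finset.sum_le_sum fun i _ =>
      mul_le_mul_of_nonneg_left (Finset.le_sup' qbar (Finset.mem_univ i)) (hπ.1 i).le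
    _ = M := by rw [← Finset.sum_mul, hπ.2, one_mul]
  have hKL := mul_nonneg hτ (KL_nonneg hπ₀ hπ.1 (hπ.2.trans hπ₀s.symm))
  have hpsi := neg_mul_log_div_le_psi (τ := τ) (π₀ := π₀) (π := π) j
  rw [Phi]
  linarith

theorem exists_isMaxOn_Phi [Nonempty (Fin N)] (hτ : 0 < τ) (hπ₀ : ∀ i, 0 < π₀ i)
    (hπ₀s : ∑ i, π₀ i = 1) :
    ∃ π ∈ openStdSimplex (Fin N), IsMaxOn (Phi τ π₀ qbar) (openStdSimplex (Fin N)) π := by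
  set M := univ.sup' univ_nonempty qbar
  -- chosen so that `M + τ log δ = Φ π₀`
  set δ := Real.exp ((Phi τ π₀ qbar π₀ - M) / τ)
  have hπ₀S : π₀ ∈ openStdSimplex (Fin N) := ⟨hπ₀, hπ₀s⟩
  have hδ1 : δ ≤ 1 := by
    have := Phi_le_sup'_add_log (qbar := qbar) hτ.le hπ₀ hπ₀s hπ₀S (Classical.arbitrary _)
    rw [div_self (hπ₀ _).ne', Real.log_one, mul_zero, add_zero] at this
    exact Real.exp_le_one_iff.2 (div_nonpos_of_nonpos_of_nonneg (sub_nonpos.2 this) hτ.le)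
  set K := stdSimplex ℝ (Fin N) ∩ Set.Ici (δ • π₀)
  have hKS : K ⊆ openStdSimplex (Fin N) := fun π hπ =>
    ⟨fun i => (mul_pos (Real.exp_pos _) (hπ₀ i)).trans_le (hπ.2 i), hπ.1.2⟩
  have hcont : ContinuousOn (Phi τ π₀ qbar) K :=
    ((strictConcaveOn_Phi hτ hπ₀).concaveOn.continuousOn
      (isOpen_set_pi Set.finite_univ fun _ _ => isOpen_Ioi)).mono
      (hKS.trans openStdSimplex_subset_pi)
  have hπ₀K : π₀ ∈ K :=
    ⟨⟨fun i => (hπ₀ i).le, hπ₀s⟩, fun i => mul_le_of_le_one_left (hπ₀ i).le hδ1⟩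
  have hout : ∀ π ∈ openStdSimplex (Fin N) \ K, Phi τ π₀ qbar π ≤ Phi τ π₀ qbar π₀ := by
    rintro π ⟨hπ, hπK⟩
    obtain ⟨j, hj⟩ : ∃ j, π j < δ * π₀ j := by
      by_contra! h
      exact hπK ⟨⟨fun i => (hπ.1 i).le, hπ.2⟩, h⟩
    calc Phi τ π₀ qbar π ≤ M + τ * Real.log (π j / π₀ j) :=
          Phi_le_sup'_add_log hτ.le hπ₀ hπ₀s hπ j
      _ ≤ M + τ * Real.log δ := by
        gcongr
        · exact div_pos (hπ.1 j) (hπ₀ j)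
        · exact ((div_lt_iff₀ (hπ₀ j)).2 hj).le
      _ = Phi τ π₀ qbar π₀ := by
        rw [Real.log_exp, mul_div_cancel₀ _ hτ.ne', add_sub_cancel]
  obtain ⟨π, hπK, hmax⟩ := ((isCompact_stdSimplex ℝ (Fin N)).inter_right
    isClosed_Ici).exists_isMaxOn_of_forall_diff_le hcont hπ₀K hout
  exact ⟨π, hKS hπK, hmax⟩

end Potential

theorem stmt_3_general (N : ℕ) (π₀ : Fin N → ℝ)
    (hπ₀pos : ∀ i, 0 < π₀ i) (hπ₀sum : ∑ i, π₀ i = 1)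
    (τ : ℝ) (hτ : 0 < τ) (qbar : Fin N → ℝ) :
    ∃! πstar : Fin N → ℝ,
      ((∀ i, 0 < πstar i) ∧ ∑ i, πstar i = 1) ∧
      ∀ π : Fin N → ℝ, (∀ i, 0 < π i) → ∑ i, π i = 1 →
        Phi τ π₀ qbar π ≤ Phi τ π₀ qbar πstar := by
  have : Nonempty (Fin N) := by
    obtain ⟨i, -, -⟩ := Finset.exists_ne_zero_of_sum_ne_zero (hπ₀sum ▸ one_ne_zero)
    exact ⟨i⟩
  obtain ⟨πstar, hstar, hmax⟩ := exists_isMaxOn_Phi (qbar := qbar) hτ hπ₀pos hπ₀sum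
  refine ⟨πstar, ⟨hstar, fun π hπ hπs => hmax ⟨hπ, hπs⟩⟩, fun π ⟨hπ, hπmax⟩ => ?_⟩
  exact ((strictConcaveOn_Phi hτ hπ₀pos).subset openStdSimplex_subset_pi
    convex_openStdSimplex).eq_of_isMaxOn (fun π' hπ' => hπmax π' hπ'.1 hπ'.2) hmax hπ hstar

/-- `Φ` admits a unique maximizer over the interior of the probability simplex
(the unique equilibrium policy of the common-agency alignment game). -/
theorem stmt_3 (N : ℕ) (hN : 2 ≤ N) (π₀ : Fin N → ℝ)
    (hπ₀pos : ∀ i, 0 < π₀ i) (hπ₀sum : ∑ i, π₀ i = 1)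
    (τ : ℝ) (hτ : 0 < τ) (qbar : Fin N → ℝ) :
    ∃! πstar : Fin N → ℝ,
      ((∀ i, 0 < πstar i) ∧ ∑ i, πstar i = 1) ∧
      ∀ π : Fin N → ℝ, (∀ i, 0 < π i) → ∑ i, π i = 1 →
        Phi τ π₀ qbar π ≤ Phi τ π₀ qbar πstar :=
  stmt_3_general N π₀ hπ₀pos hπ₀sum τ hτ qbar
end

section
/- Let N ≥ 1, let τ > 0, let π and π₀ lie in the interior of the probability simplex in ℝ^N, and let Ȳ ∈ ℝ^N. Define c_min(π) = max_{i∈[N]} (−τ·log(π_i/(π₀)_i)) and c_max(π) = min_{i∈[N]} (Ȳ_i − τ·log(π_i/(π₀)_i)). Then there exists Y ∈ ℝ^N with 0 ≤ Y_i ≤ Ȳ_i for all i and softmax(log π₀ + Y/τ) = π if and only if c_min(π) ≤ c_max(π). -/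
open Finset

/-- `softmax(u)_i = exp(u_i) / Σ_j exp(u_j)`. -/
noncomputable def softmax {N : ℕ} (u : Fin N → ℝ) : Fin N → ℝ :=
  fun i => Real.exp (u i) / ∑ j, Real.exp (u j)

/-- A policy `π` is reachable by a box-constrained aggregate incentive
`0 ≤ Y ≤ Ȳ` with `softmax(log π₀ + Y/τ) = π` iff `c_min(π) ≤ c_max(π)`. -/
theorem stmt_6 (N : ℕ) (hN : 1 ≤ N) (τ : ℝ) (hτ : 0 < τ)
    (π π₀ : Fin N → ℝ)
    (hπpos : ∀ i, 0 < π i) (hπsum : ∑ i, π i = 1)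
    (hπ₀pos : ∀ i, 0 < π₀ i) (hπ₀sum : ∑ i, π₀ i = 1)
    (Ybar : Fin N → ℝ)
    (cmin cmax : ℝ)
    (hcmin : cmin = ⨆ i, -τ * Real.log (π i / π₀ i))
    (hcmax : cmax = ⨅ i, (Ybar i - τ * Real.log (π i / π₀ i))) :
    (∃ Y : Fin N → ℝ, (∀ i, 0 ≤ Y i ∧ Y i ≤ Ybar i) ∧
        softmax (fun i => Real.log (π₀ i) + Y i / τ) = π) ↔
      cmin ≤ cmax := by
  have hNpos : 0 < N := hN
  haveI : Nonempty (Fin N) := Fin.pos_iff_nonempty.mp hNpos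
  have hτ' : (τ : ℝ) ≠ 0 := hτ.ne'
  constructor
  · rintro ⟨Y, hY, hsm⟩
    set Z := ∑ j, Real.exp (Real.log (π₀ j) + Y j / τ) with hZ
    have hZpos : 0 < Z :=
      Finset.sum_pos (fun j _ => Real.exp_pos _) Finset.univ_nonempty
    have hYi : ∀ i, Y i = τ * Real.log (π i / π₀ i) + τ * Real.log Z := by
      intro i
      have h1 : Real.exp (Real.log (π₀ i) + Y i / τ) / Z = π i := congrFun hsm i
      have h2 : Real.exp (Real.log (π₀ i) + Y i / τ) = π i * Z :=
        (div_eq_iff hZpos.ne').mp h1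
      have h3 : Real.log (π₀ i) + Y i / τ = Real.log (π i * Z) := by
        rw [← h2, Real.log_exp]
      rw [Real.log_mul (ne_of_gt (hπpos i)) (ne_of_gt hZpos)] at h3
      have h4 : Real.log (π i / π₀ i) = Real.log (π i) - Real.log (π₀ i) :=
        Real.log_div (ne_of_gt (hπpos i)) (ne_of_gt (hπ₀pos i))
      have h5 : Y i / τ = Real.log (π i) - Real.log (π₀ i) + Real.log Z := by
        linarith
      have h6 : Y i = τ * (Real.log (π i) - Real.log (π₀ i) + Real.log Z) := by
        rw [← h5]; field_simp
      rw [h6, h4]; ring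
    rw [hcmin, hcmax]
    have hc1 : (⨆ i, -τ * Real.log (π i / π₀ i)) ≤ τ * Real.log Z := by
      apply ciSup_le
      intro i
      have h1 := (hY i).1
      have h2 := hYi i
      nlinarith
    have hc2 : τ * Real.log Z ≤ ⨅ i, (Ybar i - τ * Real.log (π i / π₀ i)) := by
      apply le_ciInf
      intro i
      have h1 := (hY i).2
      have h2 := hYi i
      linarith
    linarith
  · intro h
    refine ⟨fun i => τ * Real.log (π i / π₀ i) + cmin, ?_, ?_⟩
    · intro i
      constructor
      · have hle : -τ * Real.log (π i / π₀ i) ≤ cmin := by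
          rw [hcmin]
          exact le_ciSup (f := fun i => -τ * Real.log (π i / π₀ i)) (Set.Finite.bddAbove (Set.finite_range _)) i
        linarith
      · have hle : cmax ≤ Ybar i - τ * Real.log (π i / π₀ i) := by
          rw [hcmax]
          exact ciInf_le (f := fun i => Ybar i - τ * Real.log (π i / π₀ i)) (Set.Finite.bddBelow (Set.finite_range _)) i
        linarith
    · funext i
      have hexp : ∀ j, Real.exp (Real.log (π₀ j) + (τ * Real.log (π j / π₀ j) + cmin) / τ)
          = π j * Real.exp (cmin / τ) := by
        intro j
        have heq : Real.log (π₀ j) + (τ * Real.log (π j / π₀ j) + cmin) / τ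
            = Real.log (π j) + cmin / τ := by
          rw [Real.log_div (hπpos j).ne' (hπ₀pos j).ne']
          field_simp
          ring
        rw [heq, Real.exp_add, Real.exp_log (hπpos j)]
      simp only [softmax, hexp]
      rw [← Finset.sum_mul, hπsum, one_mul]
      rw [mul_div_assoc, div_self (Real.exp_ne_zero _), mul_one]
end

section
/- Let N ≥ 1, J ≥ 1 an integer, τ > 0, let π and π₀ lie in the interior of the probability simplex in ℝ^N, let Ȳ ∈ ℝ^N and Q ∈ ℝ^N. Define c_min(π) = max_{i∈[N]} (−τ·log(π_i/(π₀)_i)) and c_max(π) = min_{i∈[N]} (Ȳ_i − τ·log(π_i/(π₀)_i)), and suppose c_min(π) ≤ c_max(π). Then the supremum of ⟨π, Q⟩ − J·⟨π, Y⟩ over all Y ∈ ℝ^N satisfying 0 ≤ Y_i ≤ Ȳ_i for all i and softmax(log π₀ + Y/τ) = π equals ⟨π, Q⟩ − J·τ·KL(π‖π₀) − J·c_min(π), and it is attained at Y_i = τ·log(π_i/(π₀)_i) + c_min(π). -/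
open Finset

/-- The supremum of `⟨π,Q⟩ − J⟨π,Y⟩` over box-constrained incentives implementing `π`
equals `⟨π,Q⟩ − Jτ·KL(π‖π₀) − J·c_min(π)`, attained at `Y_i = τ log(π_i/(π₀)_i) + c_min(π)`. -/
theorem stmt_7 (N J : ℕ) (hN : 1 ≤ N) (hJ : 1 ≤ J) (τ : ℝ) (hτ : 0 < τ)
    (π π₀ : Fin N → ℝ)
    (hπpos : ∀ i, 0 < π i) (hπsum : ∑ i, π i = 1)
    (hπ₀pos : ∀ i, 0 < π₀ i) (hπ₀sum : ∑ i, π₀ i = 1)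
    (Ybar Q : Fin N → ℝ)
    (cmin cmax : ℝ)
    (hcmin : cmin = ⨆ i, -τ * Real.log (π i / π₀ i))
    (hcmax : cmax = ⨅ i, (Ybar i - τ * Real.log (π i / π₀ i)))
    (hle : cmin ≤ cmax) :
    IsGreatest
      {v : ℝ | ∃ Y : Fin N → ℝ, (∀ i, 0 ≤ Y i ∧ Y i ≤ Ybar i) ∧
        softmax (fun i => Real.log (π₀ i) + Y i / τ) = π ∧
        v = (∑ i, π i * Q i) - (J : ℝ) * ∑ i, π i * Y i}
      ((∑ i, π i * Q i) - (J : ℝ) * τ * KL π π₀ - (J : ℝ) * cmin) ∧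
    ((∀ i, 0 ≤ τ * Real.log (π i / π₀ i) + cmin ∧
        τ * Real.log (π i / π₀ i) + cmin ≤ Ybar i) ∧
      softmax (fun i => Real.log (π₀ i) + (τ * Real.log (π i / π₀ i) + cmin) / τ) = π ∧
      (∑ i, π i * Q i) - (J : ℝ) * ∑ i, π i * (τ * Real.log (π i / π₀ i) + cmin) =
        (∑ i, π i * Q i) - (J : ℝ) * τ * KL π π₀ - (J : ℝ) * cmin) := by
  have hNe : Nonempty (Fin N) := ⟨⟨0, hN⟩⟩
  have hcmin_ge : ∀ i, -τ * Real.log (π i / π₀ i) ≤ cmin := by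
    intro i
    rw [hcmin]
    exact le_ciSup (f := fun i => -τ * Real.log (π i / π₀ i))
      (Set.Finite.bddAbove (Set.finite_range _)) i
  have hcmax_le : ∀ i, cmax ≤ Ybar i - τ * Real.log (π i / π₀ i) := by
    intro i
    rw [hcmax]
    exact ciInf_le (f := fun i => Ybar i - τ * Real.log (π i / π₀ i))
      (Set.Finite.bddBelow (Set.finite_range _)) i
  have hfeas : ∀ i, 0 ≤ τ * Real.log (π i / π₀ i) + cmin ∧
      τ * Real.log (π i / π₀ i) + cmin ≤ Ybar i := by
    intro i
    exact ⟨by linarith [hcmin_ge i], by linarith [hcmax_le i, hle]⟩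
  -- softmax identity for any shift c
  have hsm : ∀ c : ℝ,
      softmax (fun i => Real.log (π₀ i) + (τ * Real.log (π i / π₀ i) + c) / τ) = π := by
    intro c
    funext i
    have key : ∀ j, Real.exp (Real.log (π₀ j) + (τ * Real.log (π j / π₀ j) + c) / τ)
        = π j * Real.exp (c / τ) := by
      intro j
      have h1 : Real.log (π₀ j) + (τ * Real.log (π j / π₀ j) + c) / τ
          = Real.log (π j) + c / τ := by
        rw [Real.log_div (ne_of_gt (hπpos j)) (ne_of_gt (hπ₀pos j))]
        field_simp
        ring
      rw [h1, Real.exp_add, Real.exp_log (hπpos j)]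
    simp only [softmax, key]
    rw [← Finset.sum_mul, hπsum, one_mul, mul_div_assoc,
      div_self (Real.exp_ne_zero _), mul_one]
  -- objective value identity
  have hobj : ∀ c : ℝ, ∑ i, π i * (τ * Real.log (π i / π₀ i) + c) = τ * KL π π₀ + c := by
    intro c
    have h : ∑ i, π i * (τ * Real.log (π i / π₀ i) + c)
        = τ * ∑ i, π i * Real.log (π i / π₀ i) + c * ∑ i, π i := by
      rw [Finset.mul_sum, Finset.mul_sum, ← Finset.sum_add_distrib]
      exact Finset.sum_congr rfl (fun i _ => by ring)
    rw [h, hπsum, mul_one, KL]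
  refine ⟨⟨⟨fun i => τ * Real.log (π i / π₀ i) + cmin, hfeas, hsm cmin,
      by rw [hobj cmin]; ring⟩, ?_⟩,
    hfeas, hsm cmin, by rw [hobj cmin]; ring⟩
  rintro v ⟨Y, hbox, hsoft, rfl⟩
  set S : ℝ := ∑ j, Real.exp (Real.log (π₀ j) + Y j / τ) with hS
  have hSpos : 0 < S := Finset.sum_pos (fun j _ => Real.exp_pos _) Finset.univ_nonempty
  have hYform : ∀ i, Y i = τ * Real.log (π i / π₀ i) + τ * Real.log S := by
    intro i
    have h1 : Real.exp (Real.log (π₀ i) + Y i / τ) / S = π i := congrFun hsoft i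
    rw [div_eq_iff (ne_of_gt hSpos)] at h1
    have h3 : Real.log (π₀ i) + Y i / τ = Real.log (π i) + Real.log S := by
      have h2 := congrArg Real.log h1
      rwa [Real.log_exp, Real.log_mul (ne_of_gt (hπpos i)) (ne_of_gt hSpos)] at h2
    have h4 : Real.log (π i / π₀ i) = Real.log (π i) - Real.log (π₀ i) :=
      Real.log_div (ne_of_gt (hπpos i)) (ne_of_gt (hπ₀pos i))
    have h5 : Y i / τ = Real.log (π i / π₀ i) + Real.log S := by rw [h4]; linarith
    field_simp at h5
    linarith
  have hc : cmin ≤ τ * Real.log S := by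
    rw [hcmin]
    apply ciSup_le
    intro i
    have h := (hbox i).1
    rw [hYform i] at h
    linarith
  have hJpos : (0:ℝ) < (J : ℝ) := by exact_mod_cast hJ
  have hsumY : ∑ i, π i * Y i = τ * KL π π₀ + τ * Real.log S := by
    rw [← hobj (τ * Real.log S)]
    exact Finset.sum_congr rfl (fun i _ => by rw [hYform i])
  rw [hsumY]
  nlinarith [hc, hJpos]
end

section
/- Let N ≥ 1, let π lie in the probability simplex in ℝ^N, and let v ∈ ℝ^N. Then Σ_{i=1}^N π_i·v_i² − (Σ_{i=1}^N π_i·v_i)² ≤ (1/2)·‖v‖₂², i.e. the quadratic form of the matrix Diag(π) − π·πᵀ satisfies vᵀ(Diag(π) − π·πᵀ)v ≤ (1/2)‖v‖₂². -/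
open Finset

/-- The quadratic form of `Diag(π) − ππᵀ` for `π` in the probability simplex is
bounded by `(1/2)‖v‖₂²`. -/
theorem stmt_8 (N : ℕ) (hN : 1 ≤ N) (π : Fin N → ℝ)
    (hπpos : ∀ i, 0 ≤ π i) (hπsum : ∑ i, π i = 1) (v : Fin N → ℝ) :
    (∑ i, π i * (v i) ^ 2) - (∑ i, π i * v i) ^ 2 ≤ (1 / 2) * ∑ i, (v i) ^ 2 := by
  have hne : (univ : Finset (Fin N)).Nonempty := ⟨⟨0, hN⟩, mem_univ _⟩
  obtain ⟨i, -, hi⟩ := Finset.exists_max_image univ v hne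
  obtain ⟨j, -, hj⟩ := Finset.exists_min_image univ v hne
  set c : ℝ := (v i + v j) / 2 with hc
  -- step 1: variance ≤ ∑ π k (v k - c)^2
  have expand : ∑ k, π k * (v k - c) ^ 2
      = (∑ k, π k * v k ^ 2) - 2*c*(∑ k, π k * v k) + c^2 := by
    have h : ∀ k : Fin N, π k * (v k - c)^2
        = π k * v k^2 - 2*c*(π k * v k) + c^2 * π k := by intro k; ring
    simp_rw [h, Finset.sum_add_distrib, Finset.sum_sub_distrib, ← Finset.mul_sum, hπsum]
    ring
  have key : (∑ k, π k * v k ^ 2) - (∑ k, π k * v k) ^ 2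
      ≤ ∑ k, π k * (v k - c) ^ 2 := by
    rw [expand]
    nlinarith [sq_nonneg ((∑ k, π k * v k) - c)]
  -- step 2: ∑ π k (v k - c)^2 ≤ ((v i - v j)/2)^2
  have hbd : ∀ k : Fin N, π k * (v k - c) ^ 2 ≤ π k * ((v i - v j)/2)^2 := by
    intro k
    have h1 := hi k (mem_univ k)
    have h2 := hj k (mem_univ k)
    have : (v k - c)^2 ≤ ((v i - v j)/2)^2 := by
      rw [hc]; nlinarith
    exact mul_le_mul_of_nonneg_left this (hπpos k)
  have step2 : ∑ k, π k * (v k - c) ^ 2 ≤ ((v i - v j)/2)^2 := by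
    calc ∑ k, π k * (v k - c) ^ 2 ≤ ∑ k, π k * ((v i - v j)/2)^2 :=
          Finset.sum_le_sum fun k _ => hbd k
      _ = ((v i - v j)/2)^2 := by rw [← Finset.sum_mul, hπsum, one_mul]
  -- step 3: ((v i - v j)/2)^2 ≤ (1/2) ∑ v k ^2
  have step3 : ((v i - v j)/2)^2 ≤ (1/2) * ∑ k, (v k)^2 := by
    by_cases hij : i = j
    · subst hij
      simp only [sub_self]
      have : (0:ℝ) ≤ ∑ k, (v k)^2 := Finset.sum_nonneg fun k _ => sq_nonneg _
      nlinarith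
    · have hsub : ({i, j} : Finset (Fin N)) ⊆ univ := subset_univ _
      have hpair : ∑ k ∈ ({i, j} : Finset (Fin N)), (v k)^2 = (v i)^2 + (v j)^2 := by
        rw [Finset.sum_pair hij]
      have hle : ∑ k ∈ ({i, j} : Finset (Fin N)), (v k)^2 ≤ ∑ k, (v k)^2 :=
        Finset.sum_le_sum_of_subset_of_nonneg hsub (fun k _ _ => sq_nonneg _)
      rw [hpair] at hle
      nlinarith [sq_nonneg (v i + v j)]
  linarith
end

section
/- Let N ≥ 1 and define softmax(u)_i = exp(u_i)/Σ_{j=1}^N exp(u_j) for u ∈ ℝ^N. Then the softmax map is (1/2)-Lipschitz with respect to the Euclidean norm: for all u, v ∈ ℝ^N, ‖softmax(u) − softmax(v)‖₂ ≤ (1/2)·‖u − v‖₂. -/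
open Finset

/-!
Along the segment `t ↦ v + t (u - v)` the derivative of `⟨softmax(·), w⟩` is the covariance of
`u - v` and `w` under the probability vector `softmax(v + t (u - v))`. Taking
`w = softmax u - softmax v`, the mean value theorem writes `‖w‖²` as such a covariance. By
Cauchy–Schwarz a covariance is at most the geometric mean of the two variances, and a variance
under any probability vector is at most half the squared Euclidean norm, since
`Var x ≤ (max x - min x)² / 4 ≤ ‖x‖² / 2`. Hence `‖w‖⁴ ≤ ‖u - v‖² ‖w‖² / 4`.
-/

section WeightedCovariance

variable {ι : Type*} [Fintype ι] (s : ι → ℝ)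

noncomputable def weightedCov (x y : ι → ℝ) : ℝ :=
  ∑ i, s i * (x i - ∑ j, s j * x j) * (y i - ∑ j, s j * y j)

variable {s}

theorem weightedCov_self_nonneg (hs : ∀ i, 0 ≤ s i) (x : ι → ℝ) : 0 ≤ weightedCov s x x :=
  sum_nonneg fun i _ => by rw [mul_assoc]; exact mul_nonneg (hs i) (mul_self_nonneg _)

theorem weightedCov_sq_le_mul (hs : ∀ i, 0 ≤ s i) (x y : ι → ℝ) :
    weightedCov s x y ^ 2 ≤ weightedCov s x x * weightedCov s y y :=
  sum_sq_le_sum_mul_sum_of_sq_le_mul _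
    (fun i _ => by rw [mul_assoc]; exact mul_nonneg (hs i) (mul_self_nonneg _))
    (fun i _ => by rw [mul_assoc]; exact mul_nonneg (hs i) (mul_self_nonneg _))
    (fun i _ => le_of_eq (by ring))

theorem weightedCov_eq_sum_mul (hs : ∑ i, s i = 1) (x y : ι → ℝ) :
    weightedCov s x y = ∑ i, s i * (x i - ∑ j, s j * x j) * y i := by
  have h : ∑ i, s i * (x i - ∑ j, s j * x j) = 0 := by
    simp only [mul_sub, sum_sub_distrib, ← sum_mul, hs, one_mul, sub_self]
  simp only [weightedCov, mul_sub (_ * _), sum_sub_distrib, ← sum_mul, h, zero_mul, sub_zero]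

theorem weightedCov_self_le_sum_mul_sub_sq (hs : ∑ i, s i = 1) (x : ι → ℝ) (c : ℝ) :
    weightedCov s x x ≤ ∑ i, s i * (x i - c) ^ 2 := by
  set m := ∑ j, s j * x j
  have h : ∑ i, s i * (x i - c) ^ 2 = weightedCov s x x + (m - c) ^ 2 := by
    have hi : ∀ i, s i * (x i - c) ^ 2
        = s i * (x i - m) * (x i - m) + 2 * (m - c) * (s i * x i) - (m ^ 2 - c ^ 2) * s i :=
      fun i => by ring
    simp only [hi, sum_add_distrib, sum_sub_distrib, ← mul_sum, hs]
    rw [weightedCov]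
    ring
  rw [h]
  exact le_add_of_nonneg_right (sq_nonneg _)

/-- Popoviciu's inequality. -/
theorem weightedCov_self_le_of_mem_Icc (hs0 : ∀ i, 0 ≤ s i) (hs1 : ∑ i, s i = 1)
    {x : ι → ℝ} {a b : ℝ} (hx : ∀ i, x i ∈ Set.Icc a b) :
    weightedCov s x x ≤ (b - a) ^ 2 / 4 := by
  calc weightedCov s x x ≤ ∑ i, s i * (x i - (a + b) / 2) ^ 2 :=
        weightedCov_self_le_sum_mul_sub_sq hs1 x _
    _ ≤ ∑ i, s i * ((b - a) ^ 2 / 4) := by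
        gcongr with i
        · exact hs0 i
        · obtain ⟨ha, hb⟩ := hx i
          nlinarith
    _ = (b - a) ^ 2 / 4 := by rw [← sum_mul, hs1, one_mul]

theorem sq_sub_le_two_mul_sum_sq (x : ι → ℝ) (a b : ι) :
    (x a - x b) ^ 2 ≤ 2 * ∑ i, x i ^ 2 := by
  rcases eq_or_ne a b with rfl | hab
  · rw [sub_self, zero_pow two_ne_zero]
    positivity
  · classical
    have h : x a ^ 2 + x b ^ 2 ≤ ∑ i, x i ^ 2 := by
      rw [← sum_pair (f := fun i => x i ^ 2) hab]
      exact sum_le_univ_sum_of_nonneg fun i => sq_nonneg (x i)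
    nlinarith [sq_nonneg (x a + x b)]

theorem weightedCov_self_le_half_sum_sq (hs0 : ∀ i, 0 ≤ s i) (hs1 : ∑ i, s i = 1)
    (x : ι → ℝ) : weightedCov s x x ≤ (∑ i, x i ^ 2) / 2 := by
  have : Nonempty ι :=
    univ_nonempty_iff.mp (nonempty_of_sum_ne_zero (hs1.symm ▸ one_ne_zero))
  obtain ⟨imax, himax⟩ := Finite.exists_max x
  obtain ⟨imin, himin⟩ := Finite.exists_min x
  calc weightedCov s x x ≤ (x imax - x imin) ^ 2 / 4 :=
        weightedCov_self_le_of_mem_Icc hs0 hs1 fun i => ⟨himin i, himax i⟩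
    _ ≤ (∑ i, x i ^ 2) / 2 := by linarith [sq_sub_le_two_mul_sum_sq x imax imin]

theorem weightedCov_sq_le_sum_sq_mul_sum_sq (hs0 : ∀ i, 0 ≤ s i) (hs1 : ∑ i, s i = 1) (x y : ι → ℝ) :
    weightedCov s x y ^ 2 ≤ (∑ i, x i ^ 2) * (∑ i, y i ^ 2) / 4 := by
  have hx := weightedCov_self_le_half_sum_sq hs0 hs1 x
  have hy := weightedCov_self_le_half_sum_sq hs0 hs1 y
  calc weightedCov s x y ^ 2 ≤ weightedCov s x x * weightedCov s y y :=
        weightedCov_sq_le_mul hs0 x y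
    _ ≤ (∑ i, x i ^ 2) / 2 * ((∑ i, y i ^ 2) / 2) :=
        mul_le_mul hx hy (weightedCov_self_nonneg hs0 y) (by positivity)
    _ = _ := by ring

end WeightedCovariance

section Softmax

variable {N : ℕ}

theorem sum_exp_pos (hN : 1 ≤ N) (u : Fin N → ℝ) : 0 < ∑ j, Real.exp (u j) :=
  sum_pos (fun j _ => Real.exp_pos (u j)) (univ_nonempty_iff.mpr (Fin.pos_iff_nonempty.mp hN))

theorem softmax_nonneg (u : Fin N → ℝ) (i : Fin N) : 0 ≤ softmax u i := by
  unfold softmax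
  positivity

theorem sum_softmax (hN : 1 ≤ N) (u : Fin N → ℝ) : ∑ i, softmax u i = 1 := by
  simp only [softmax, ← sum_div, div_self (sum_exp_pos hN u).ne']

theorem hasDerivAt_softmax_line (hN : 1 ≤ N) (u d : Fin N → ℝ) (i : Fin N) (t : ℝ) :
    HasDerivAt (fun t => softmax (fun j => u j + t * d j) i)
      (softmax (fun j => u j + t * d j) i *
        (d i - ∑ j, softmax (fun j => u j + t * d j) j * d j)) t := by
  have hexp : ∀ j, HasDerivAt (fun t => Real.exp (u j + t * d j))
      (Real.exp (u j + t * d j) * d j) t :=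
    fun j => ((hasDerivAt_mul_const (d j)).const_add (u j)).exp
  have hS := (sum_exp_pos hN fun j => u j + t * d j).ne'
  refine ((hexp i).fun_div (HasDerivAt.fun_sum fun j _ => hexp j) hS).congr_deriv ?_
  simp only [softmax, div_mul_eq_mul_div, ← sum_div]
  field_simp

theorem exists_sum_sq_sub_softmax_eq_weightedCov (hN : 1 ≤ N) (u v : Fin N → ℝ) :
    ∃ s : Fin N → ℝ, (∀ i, 0 ≤ s i) ∧ ∑ i, s i = 1 ∧
      ∑ i, (softmax u i - softmax v i) ^ 2 =
        weightedCov s (fun i => u i - v i) (fun i => softmax u i - softmax v i) := by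
  set d := fun i => u i - v i
  set w := fun i => softmax u i - softmax v i
  set p : ℝ → Fin N → ℝ := fun t j => v j + t * d j
  set h : ℝ → ℝ := fun t => ∑ i, w i * softmax (p t) i
  have hderiv : ∀ t, HasDerivAt h (weightedCov (softmax (p t)) d w) t := by
    intro t
    rw [weightedCov_eq_sum_mul (sum_softmax hN _)]
    refine (HasDerivAt.fun_sum fun i _ =>
      (hasDerivAt_softmax_line hN v d i t).const_mul (w i)).congr_deriv ?_
    exact sum_congr rfl fun i _ => by ring
  obtain ⟨t, -, ht⟩ := exists_hasDerivAt_eq_slope h _ zero_lt_one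
    (fun t _ => (hderiv t).continuousAt.continuousWithinAt) (fun t _ => hderiv t)
  refine ⟨softmax (p t), softmax_nonneg _, sum_softmax hN _, ?_⟩
  have hp0 : p 0 = v := funext fun j => by simp [p]
  have hp1 : p 1 = u := funext fun j => by simp [p, d]
  rw [ht, sub_zero, div_one]
  simp only [h, hp0, hp1, ← sum_sub_distrib, ← mul_sub, sq, w]

end Softmax

/-- The softmax map is `(1/2)`-Lipschitz in the Euclidean norm. -/
theorem stmt_9 (N : ℕ) (hN : 1 ≤ N) (u v : Fin N → ℝ) :
    Real.sqrt (∑ i, (softmax u i - softmax v i) ^ 2) ≤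
      (1 / 2) * Real.sqrt (∑ i, (u i - v i) ^ 2) := by
  obtain ⟨s, hs0, hs1, hW⟩ := exists_sum_sq_sub_softmax_eq_weightedCov hN u v
  have hcov := weightedCov_sq_le_sum_sq_mul_sum_sq hs0 hs1 (fun i => u i - v i)
    (fun i => softmax u i - softmax v i)
  rw [← hW] at hcov
  set W := ∑ i, (softmax u i - softmax v i) ^ 2
  set D := ∑ i, (u i - v i) ^ 2
  have hD0 : 0 ≤ D := by positivity
  have hWD : W ≤ D / 4 := by nlinarith
  calc Real.sqrt W ≤ Real.sqrt ((1 / 2) ^ 2 * D) := Real.sqrt_le_sqrt (by linarith)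
    _ = 1 / 2 * Real.sqrt D := by
        rw [Real.sqrt_mul (by positivity), Real.sqrt_sq (by norm_num)]
end

section
/- Let N ≥ 2, let π lie in the probability simplex in ℝ^N, and suppose there is π̲ > 0 with π_i ≥ π̲ for all i ∈ [N]. Then for every v ∈ ℝ^N with Σ_{i=1}^N v_i = 0, one has vᵀ(Diag(π) − π·πᵀ)v = Σ_{i=1}^N π_i·v_i² − (Σ_{i=1}^N π_i·v_i)² ≥ π̲·(1 − (N−1)·π̲)·‖v‖₂². -/
open Finset

/-- Eigenvalue lower bound for `Diag(π) − ππᵀ` on the tangent space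
`{v : Σ_i v_i = 0}` of the simplex: if `π_i ≥ π̲ > 0` for all `i`, then
`vᵀ(Diag(π) − ππᵀ)v ≥ π̲(1 − (N−1)π̲)‖v‖₂²`. -/
theorem stmt_10 (N : ℕ) (hN : 2 ≤ N) (π : Fin N → ℝ)
    (hπpos : ∀ i, 0 ≤ π i) (hπsum : ∑ i, π i = 1)
    (pibar : ℝ) (hpibar : 0 < pibar) (hlb : ∀ i, pibar ≤ π i)
    (v : Fin N → ℝ) (hv : ∑ i, v i = 0) :
    pibar * (1 - ((N : ℝ) - 1) * pibar) * ∑ i, (v i) ^ 2 ≤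
      (∑ i, π i * (v i) ^ 2) - (∑ i, π i * v i) ^ 2 := by
  have hS : (0:ℝ) ≤ ∑ i, (v i) ^ 2 := Finset.sum_nonneg fun i _ => sq_nonneg _
  have hNp : (N : ℝ) * pibar ≤ 1 := by
    calc (N : ℝ) * pibar = ∑ _i : Fin N, pibar := by
          simp [mul_comm]
      _ ≤ ∑ i, π i := Finset.sum_le_sum fun i _ => hlb i
      _ = 1 := hπsum
  set f : Fin N → ℝ := fun i => Real.sqrt (π i - pibar) with hf
  have hfsq : ∀ i, f i ^ 2 = π i - pibar := by
    intro i
    exact Real.sq_sqrt (by linarith [hlb i])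
  have h1 : ∑ i, π i * v i = ∑ i, f i * (f i * v i) := by
    have : ∀ i ∈ Finset.univ, f i * (f i * v i) = (π i - pibar) * v i := by
      intro i _
      rw [← mul_assoc, ← sq, hfsq]
    rw [Finset.sum_congr rfl this]
    simp [sub_mul, Finset.sum_sub_distrib, ← Finset.mul_sum, hv]
  have hCS := Finset.sum_mul_sq_le_sq_mul_sq Finset.univ f (fun i => f i * v i)
  have h2 : ∑ i, f i ^ 2 = 1 - (N : ℝ) * pibar := by
    simp only [hfsq]
    rw [Finset.sum_sub_distrib, hπsum]
    simp [mul_comm]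
  have h3 : ∀ i ∈ Finset.univ, (f i * v i) ^ 2 = (π i - pibar) * (v i) ^ 2 := by
    intro i _
    rw [mul_pow, hfsq]
  rw [Finset.sum_congr rfl h3] at hCS
  rw [h2] at hCS
  rw [h1]
  have key : (∑ i, f i * (f i * v i)) ^ 2 ≤
      (1 - (N : ℝ) * pibar) * ∑ i, (π i - pibar) * (v i) ^ 2 := hCS
  have h4 : ∑ i, pibar * (v i) ^ 2 ≤
      ∑ i, (π i * (v i) ^ 2 - (1 - (N : ℝ) * pibar) * ((π i - pibar) * (v i) ^ 2)) := by
    apply Finset.sum_le_sum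
    intro i _
    have h5 := hlb i
    have h6 := sq_nonneg (v i)
    nlinarith [mul_nonneg (mul_nonneg (Nat.cast_nonneg N : (0:ℝ) ≤ N) hpibar.le) (mul_nonneg (by linarith : (0:ℝ) ≤ π i - pibar) h6)]
  rw [Finset.sum_sub_distrib, ← Finset.mul_sum, ← Finset.mul_sum] at h4
  have hN1 : (0:ℝ) ≤ ((N:ℝ) - 1) * pibar := by
    have : (1:ℝ) ≤ (N:ℝ) := by exact_mod_cast Nat.one_le_of_lt hN
    nlinarith
  nlinarith [mul_nonneg (mul_nonneg hN1 hpibar.le) hS]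
end

section
/- Let N ≥ 1, let π₀ lie in the interior of the probability simplex in ℝ^N, let τ > 0, and let c ∈ ℝ^N with c_i ≥ 0 for all i and ‖c‖₂ ≤ R for some R ≥ 0. Define f : ℝ^N × ℝ^N → ℝ by f(y, z) = ⟨softmax(log π₀ + (z+y)/τ), c − y⟩. Then f is jointly Lipschitz with constant R/τ + 1 on the region D = {(y, z) : 0 ≤ y_i ≤ c_i for all i}: for all (y,z), (y',z') ∈ D, |f(y,z) − f(y',z')| ≤ (R/τ + 1)·√(‖y−y'‖₂² + ‖z−z'‖₂²). -/
open Finset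

/-- A principal's utility `f(y,z) = ⟨softmax(log π₀ + (z+y)/τ), c − y⟩`. -/
noncomputable def util {N : ℕ} (τ : ℝ) (π₀ c : Fin N → ℝ) (y z : Fin N → ℝ) : ℝ :=
  ∑ i, softmax (fun i => Real.log (π₀ i) + (z i + y i) / τ) i * (c i - y i)

/-!
Along the segment from `(y', z')` to `(y, z)` the utility is differentiable. Writing `p` for the
softmax weights and `w = c - y`, its derivative is the `p`-covariance of `w` with the change of the
logits, minus the `p`-mean of `Δy`. By the weighted Cauchy–Schwarz inequality and Popoviciu's bound
`Var_p w ≤ R² / 4` (on the box, `w ∈ [0, R]`), the first term is at most `(R / τ) ‖(Δy, Δz)‖` and the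
second at most `‖Δy‖`; the mean value inequality concludes.
-/

section WeightedSums

variable {ι : Type*} [Fintype ι] {p : ι → ℝ}

theorem sq_sum_mul_mul_le_of_nonneg (hp : ∀ i, 0 ≤ p i) (f g : ι → ℝ) :
    (∑ i, p i * f i * g i) ^ 2 ≤ (∑ i, p i * f i ^ 2) * ∑ i, p i * g i ^ 2 :=
  sum_sq_le_sum_mul_sum_of_sq_le_mul _ (fun i _ => mul_nonneg (hp i) (sq_nonneg _))
    (fun i _ => mul_nonneg (hp i) (sq_nonneg _)) fun i _ => le_of_eq (by ring)

theorem sum_mul_sq_le_sum_sq (hp : p ∈ stdSimplex ℝ ι) (a : ι → ℝ) :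
    ∑ i, p i * a i ^ 2 ≤ ∑ i, a i ^ 2 :=
  sum_le_sum fun i _ => mul_le_of_le_one_left (sq_nonneg _) (mem_Icc_of_mem_stdSimplex hp i).2

theorem abs_sum_mul_le_sqrt_sum_sq (hp : p ∈ stdSimplex ℝ ι) (b : ι → ℝ) :
    |∑ i, p i * b i| ≤ √(∑ i, b i ^ 2) := by
  refine Real.abs_le_sqrt ?_
  calc (∑ i, p i * b i) ^ 2 = (∑ i, p i * 1 * b i) ^ 2 := by simp
    _ ≤ (∑ i, p i * 1 ^ 2) * ∑ i, p i * b i ^ 2 := sq_sum_mul_mul_le_of_nonneg hp.1 _ _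
    _ ≤ ∑ i, b i ^ 2 := by simpa [hp.2] using sum_mul_sq_le_sum_sq hp b

/-- Popoviciu's inequality on variances. -/
theorem sum_mul_sub_mean_sq_le (hp : p ∈ stdSimplex ℝ ι) {w : ι → ℝ} {R : ℝ}
    (hw : ∀ i, 0 ≤ w i ∧ w i ≤ R) :
    ∑ i, p i * (w i - ∑ j, p j * w j) ^ 2 ≤ (R / 2) ^ 2 := by
  set m := ∑ j, p j * w j
  have hvar : ∑ i, p i * (w i - m) ^ 2 = ∑ i, p i * w i ^ 2 - m ^ 2 := by
    calc ∑ i, p i * (w i - m) ^ 2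
        = ∑ i, p i * w i ^ 2 - 2 * m * ∑ i, p i * w i + m ^ 2 * ∑ i, p i := by
          simp only [mul_sum, ← sum_sub_distrib, ← sum_add_distrib]
          exact sum_congr rfl fun i _ => by ring
      _ = ∑ i, p i * w i ^ 2 - m ^ 2 := by rw [hp.2]; ring
  have hsq : ∑ i, p i * w i ^ 2 ≤ R * m := by
    rw [mul_sum]
    exact sum_le_sum fun i _ => by nlinarith [hp.1 i, hw i, mul_nonneg (hp.1 i) (hw i).1]
  nlinarith [sq_nonneg (R - 2 * m)]

theorem abs_sum_mul_sub_mean_mul_le (hp : p ∈ stdSimplex ℝ ι) {w : ι → ℝ} {R : ℝ}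
    (hR : 0 ≤ R) (hw : ∀ i, 0 ≤ w i ∧ w i ≤ R) (a : ι → ℝ) :
    |∑ i, p i * (w i - ∑ j, p j * w j) * a i| ≤ R / 2 * √(∑ i, a i ^ 2) := by
  rw [← Real.sqrt_sq (by positivity : 0 ≤ R / 2), ← Real.sqrt_mul (sq_nonneg _)]
  refine Real.abs_le_sqrt ((sq_sum_mul_mul_le_of_nonneg hp.1 _ _).trans ?_)
  exact mul_le_mul (sum_mul_sub_mean_sq_le hp hw) (sum_mul_sq_le_sum_sq hp a)
    (sum_nonneg fun i _ => mul_nonneg (hp.1 i) (sq_nonneg _)) (sq_nonneg _)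

theorem sqrt_sum_add_div_sq_le (a b : ι → ℝ) {τ : ℝ} (hτ : 0 < τ) :
    √(∑ i, ((a i + b i) / τ) ^ 2) ≤ 2 / τ * √(∑ i, a i ^ 2 + ∑ i, b i ^ 2) := by
  rw [← Real.sqrt_sq (by positivity : 0 ≤ 2 / τ), ← Real.sqrt_mul (sq_nonneg _)]
  refine Real.sqrt_le_sqrt ?_
  have hab : ∑ i, (a i + b i) ^ 2 ≤ 2 * (∑ i, a i ^ 2 + ∑ i, b i ^ 2) := by
    rw [mul_add, mul_sum, mul_sum, ← sum_add_distrib]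
    exact sum_le_sum fun i _ => by nlinarith [sq_nonneg (a i - b i)]
  have ha := sum_nonneg fun i (_ : i ∈ univ) => sq_nonneg (a i)
  have hb := sum_nonneg fun i (_ : i ∈ univ) => sq_nonneg (b i)
  simp only [div_pow, ← sum_div]
  rw [div_mul_eq_mul_div, div_le_div_iff_of_pos_right (by positivity)]
  linarith

end WeightedSums

section Softmax

variable {N : ℕ}

theorem softmax_mem_stdSimplex [NeZero N] (u : Fin N → ℝ) : softmax u ∈ stdSimplex ℝ (Fin N) := by
  have hZ : 0 < ∑ j, Real.exp (u j) := sum_pos (fun j _ => Real.exp_pos _) univ_nonempty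
  refine ⟨fun i => div_nonneg (Real.exp_pos _).le hZ.le, ?_⟩
  simp only [softmax, ← sum_div, div_self hZ.ne']

theorem hasDerivAt_softmax {u : ℝ → Fin N → ℝ} {u' : Fin N → ℝ} {t : ℝ}
    (hu : ∀ i, HasDerivAt (u · i) (u' i) t) (i : Fin N) :
    HasDerivAt (fun s => softmax (u s) i)
      (softmax (u t) i * (u' i - ∑ j, softmax (u t) j * u' j)) t := by
  have hZ : 0 < ∑ j, Real.exp (u t j) := sum_pos (fun j _ => Real.exp_pos _) ⟨i, mem_univ i⟩
  refine ((hu i).exp.div (HasDerivAt.fun_sum fun j _ => (hu j).exp) hZ.ne').congr_deriv ?_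
  simp only [softmax, div_mul_eq_mul_div, ← sum_div]
  field_simp

theorem hasDerivAt_sum_softmax_mul {u w : ℝ → Fin N → ℝ} {u' w' : Fin N → ℝ} {t : ℝ}
    (hu : ∀ i, HasDerivAt (u · i) (u' i) t) (hw : ∀ i, HasDerivAt (w · i) (w' i) t) :
    HasDerivAt (fun s => ∑ i, softmax (u s) i * w s i)
      (∑ i, softmax (u t) i * (w t i - ∑ j, softmax (u t) j * w t j) * u' i +
        ∑ i, softmax (u t) i * w' i) t := by
  refine (HasDerivAt.fun_sum (u := univ) (A := fun i s => softmax (u s) i * w s i)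
    fun i _ => (hasDerivAt_softmax hu i).mul (hw i)).congr_deriv ?_
  set p := softmax (u t)
  simp only [mul_sub, sub_mul, sum_add_distrib, sum_sub_distrib,
    mul_right_comm _ (∑ j, p j * u' j), mul_right_comm _ (∑ j, p j * w t j), ← sum_mul]
  rw [sum_congr rfl fun x _ => mul_right_comm (p x) (u' x) (w t x)]
  ring

end Softmax

section Utility

variable {N : ℕ} {τ : ℝ} {π₀ c : Fin N → ℝ}

noncomputable def utilDeriv (τ : ℝ) (π₀ c y z dy dz : Fin N → ℝ) : ℝ :=
  let p := softmax fun i => Real.log (π₀ i) + (z i + y i) / τ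
  ∑ i, p i * ((c i - y i) - ∑ j, p j * (c j - y j)) * ((dz i + dy i) / τ) + ∑ i, p i * -dy i

theorem hasDerivAt_util_lineMap (y z y' z' : Fin N → ℝ) (s : ℝ) :
    HasDerivAt (fun s => util τ π₀ c (AffineMap.lineMap y' y s) (AffineMap.lineMap z' z s))
      (utilDeriv τ π₀ c (AffineMap.lineMap y' y s) (AffineMap.lineMap z' z s) (y - y') (z - z'))
      s := by
  have hY : ∀ i, HasDerivAt (AffineMap.lineMap y' y · i) (y i - y' i) s :=
    hasDerivAt_pi.1 AffineMap.hasDerivAt_lineMap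
  have hZ : ∀ i, HasDerivAt (AffineMap.lineMap z' z · i) (z i - z' i) s :=
    hasDerivAt_pi.1 AffineMap.hasDerivAt_lineMap
  exact hasDerivAt_sum_softmax_mul (fun i => (((hZ i).add (hY i)).div_const τ).const_add _)
    fun i => (hY i).const_sub _

theorem abs_utilDeriv_le [NeZero N] (hτ : 0 < τ) {R : ℝ} (hR : 0 ≤ R) (hcR : ∀ i, c i ≤ R)
    {y : Fin N → ℝ} (hy : y ∈ Set.Icc 0 c) (z dy dz : Fin N → ℝ) :
    |utilDeriv τ π₀ c y z dy dz| ≤ (R / τ + 1) * √(∑ i, dy i ^ 2 + ∑ i, dz i ^ 2) := by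
  set D := √(∑ i, dy i ^ 2 + ∑ i, dz i ^ 2)
  set p := softmax fun i => Real.log (π₀ i) + (z i + y i) / τ
  have hp : p ∈ stdSimplex ℝ (Fin N) := softmax_mem_stdSimplex _
  have hw : ∀ i, 0 ≤ c i - y i ∧ c i - y i ≤ R := fun i => by
    have : 0 ≤ y i := hy.1 i
    exact ⟨sub_nonneg.2 (hy.2 i), by linarith [hcR i]⟩
  have hcov := (abs_sum_mul_sub_mean_mul_le hp hR hw fun i => (dz i + dy i) / τ).trans
    (mul_le_mul_of_nonneg_left ((sqrt_sum_add_div_sq_le dz dy hτ).trans_eq (by rw [add_comm]))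
      (by positivity : 0 ≤ R / 2))
  have hmean : |∑ i, p i * -dy i| ≤ D := (abs_sum_mul_le_sqrt_sum_sq hp _).trans <| by
    simp only [neg_sq]
    exact Real.sqrt_le_sqrt (le_add_of_nonneg_right (sum_nonneg fun i _ => sq_nonneg _))
  calc |utilDeriv τ π₀ c y z dy dz| ≤ R / 2 * (2 / τ * D) + D :=
        (abs_add_le _ _).trans (add_le_add hcov hmean)
    _ = (R / τ + 1) * D := by ring

end Utility

theorem stmt_12_general (N : ℕ) (hN : 1 ≤ N) (π₀ : Fin N → ℝ)
    (τ : ℝ) (hτ : 0 < τ) (c : Fin N → ℝ)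
    (R : ℝ) (hR : 0 ≤ R) (hcR : Real.sqrt (∑ i, (c i) ^ 2) ≤ R) :
    ∀ y z y' z' : Fin N → ℝ,
      (∀ i, 0 ≤ y i ∧ y i ≤ c i) → (∀ i, 0 ≤ y' i ∧ y' i ≤ c i) →
      |util τ π₀ c y z - util τ π₀ c y' z'| ≤
        (R / τ + 1) *
          Real.sqrt ((∑ i, (y i - y' i) ^ 2) + (∑ i, (z i - z' i) ^ 2)) := by
  intro y z y' z' hy hy'
  have : NeZero N := ⟨by omega⟩
  have hcR' : ∀ i, c i ≤ R := fun i =>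
    (Real.le_sqrt_of_sq_le (single_le_sum (fun j _ => sq_nonneg (c j)) (mem_univ i))).trans hcR
  have hbox : ∀ s ∈ Set.Icc (0 : ℝ) 1, AffineMap.lineMap y' y s ∈ Set.Icc 0 c := fun s hs =>
    (convex_Icc 0 c).lineMap_mem ⟨fun i => (hy' i).1, fun i => (hy' i).2⟩
      ⟨fun i => (hy i).1, fun i => (hy i).2⟩ hs
  simpa using norm_image_sub_le_of_norm_deriv_le_segment_01'
    (fun s _ => (hasDerivAt_util_lineMap y z y' z' s).hasDerivWithinAt)
    fun s hs => abs_utilDeriv_le hτ hR hcR' (hbox s (Set.Ico_subset_Icc_self hs)) _ _ _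

/-- The principal's utility is jointly `(R/τ + 1)`-Lipschitz on the feasible box
`{(y,z) : 0 ≤ y ≤ c}` (Euclidean norms). -/
theorem stmt_12 (N : ℕ) (hN : 1 ≤ N) (π₀ : Fin N → ℝ)
    (hπ₀pos : ∀ i, 0 < π₀ i) (hπ₀sum : ∑ i, π₀ i = 1)
    (τ : ℝ) (hτ : 0 < τ) (c : Fin N → ℝ) (hc0 : ∀ i, 0 ≤ c i)
    (R : ℝ) (hR : 0 ≤ R) (hcR : Real.sqrt (∑ i, (c i) ^ 2) ≤ R) :
    ∀ y z y' z' : Fin N → ℝ,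
      (∀ i, 0 ≤ y i ∧ y i ≤ c i) → (∀ i, 0 ≤ y' i ∧ y' i ≤ c i) →
      |util τ π₀ c y z - util τ π₀ c y' z'| ≤
        (R / τ + 1) *
          Real.sqrt ((∑ i, (y i - y' i) ^ 2) + (∑ i, (z i - z' i) ^ 2)) :=
  stmt_12_general N hN π₀ τ hτ c R hR hcR
end

section
/- Under the setup of the regret bound (N ≥ 1, J ≥ 2, τ > 0, π₀ interior to the simplex, c^j ≥ 0 with ‖c^j‖₂ ≤ R, f_j(y; z) = ⟨softmax(log π₀ + (z+y)/τ), c^j − y⟩, exact best-response iterates y^{j,(t)} ∈ [0, c^j] with f_j(y^{j,(t)}; Y^{-j,(t−1)}) ≥ f_j(ȳ; Y^{-j,(t−1)}) for all ȳ ∈ [0, c^j], where Y^{-j,(t)} = Σ_{k≠j} y^{k,(t)}, and a_t = max_{j∈[J]} ‖y^{j,(t)} − y^{j*}‖₂ for fixed y^{j*} ∈ [0, c^j]), define the regret R_j(T) = sup_{ȳ∈[0,c^j]} Σ_{t=1}^T [f_j(ȳ; Y^{-j,(t)}) − f_j(y^{j,(t)}; Y^{-j,(t)})]. If a_t → 0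 as t → ∞, then for every j ∈ [J] the time-averaged regret vanishes: R_j(T)/T → 0 as T → ∞. -/
open Finset

lemma cesaro_Icc {u : ℕ → ℝ} (h : Filter.Tendsto u Filter.atTop (nhds 0)) :
    Filter.Tendsto (fun T : ℕ => (∑ t ∈ Finset.Icc 1 T, u t) / (T : ℝ))
      Filter.atTop (nhds 0) := by
  have h1 : Filter.Tendsto (fun i : ℕ => u (1 + i)) Filter.atTop (nhds 0) := by
    have := h.comp (Filter.tendsto_add_atTop_nat 1)
    simpa [Function.comp_def, add_comm] using this
  have h2 := h1.cesaro
  have hsum : ∀ T : ℕ, ∑ t ∈ Finset.Icc 1 T, u t = ∑ i ∈ Finset.range T, u (1 + i) := by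
    intro T
    rw [← Finset.Ico_add_one_right_eq_Icc, Finset.sum_Ico_eq_sum_range]
    simp
  simpa [hsum, div_eq_inv_mul] using h2

lemma abs_le_sqrt_sum_sq {N : ℕ} (x : Fin N → ℝ) (i : Fin N) :
    |x i| ≤ Real.sqrt (∑ k, x k ^ 2) := by
  rw [← Real.sqrt_sq_eq_abs]
  exact Real.sqrt_le_sqrt
    (Finset.single_le_sum (fun k _ => sq_nonneg (x k)) (Finset.mem_univ i))

lemma continuous_util {N : ℕ} (hN : 1 ≤ N) (π₀ c : Fin N → ℝ) (τ : ℝ) :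
    Continuous (fun p : (Fin N → ℝ) × (Fin N → ℝ) => util τ π₀ c p.1 p.2) := by
  haveI : Nonempty (Fin N) := Fin.pos_iff_nonempty.mp hN
  unfold util softmax
  apply continuous_finset_sum
  intro i _
  apply Continuous.mul
  · apply Continuous.div
    · fun_prop
    · fun_prop
    · intro p
      have : 0 < ∑ k, Real.exp (Real.log (π₀ k) + (p.2 k + p.1 k) / τ) :=
        Finset.sum_pos (fun k _ => Real.exp_pos _) Finset.univ_nonempty
      exact this.ne'
  · fun_prop

/-- No-regret conclusion: if the Jacobi best-response iterates converge to the
reference profile (`a_t → 0`), then each principal's time-averaged regret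
`R_j(T)/T` vanishes as `T → ∞`. -/
theorem stmt_15 (N J : ℕ) (hN : 1 ≤ N) (hJ : 2 ≤ J) (τ : ℝ) (hτ : 0 < τ)
    (π₀ : Fin N → ℝ) (hπ₀pos : ∀ i, 0 < π₀ i) (hπ₀sum : ∑ i, π₀ i = 1)
    (c : Fin J → Fin N → ℝ) (R : ℝ)
    (hc0 : ∀ j i, 0 ≤ c j i) (hcR : ∀ j, Real.sqrt (∑ i, (c j i) ^ 2) ≤ R)
    (y : ℕ → Fin J → Fin N → ℝ)
    (hybox : ∀ t j i, 0 ≤ y t j i ∧ y t j i ≤ c j i)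
    (Ym : ℕ → Fin J → Fin N → ℝ)
    (hYm : ∀ t j, Ym t j = ∑ k ∈ Finset.univ.erase j, y t k)
    (hbr : ∀ t : ℕ, 1 ≤ t → ∀ j, ∀ ybar : Fin N → ℝ,
      (∀ i, 0 ≤ ybar i ∧ ybar i ≤ c j i) →
      util τ π₀ (c j) ybar (Ym (t - 1) j) ≤ util τ π₀ (c j) (y t j) (Ym (t - 1) j))
    (ystar : Fin J → Fin N → ℝ)
    (hystar : ∀ j i, 0 ≤ ystar j i ∧ ystar j i ≤ c j i)
    (a : ℕ → ℝ)
    (ha : ∀ t, a t = ⨆ j, Real.sqrt (∑ i, (y t j i - ystar j i) ^ 2))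
    (hconv : Filter.Tendsto a Filter.atTop (nhds 0))
    (Reg : Fin J → ℕ → ℝ)
    (hReg : ∀ j T, Reg j T = sSup {v : ℝ | ∃ ybar : Fin N → ℝ,
      (∀ i, 0 ≤ ybar i ∧ ybar i ≤ c j i) ∧
      v = ∑ t ∈ Finset.Icc 1 T,
        (util τ π₀ (c j) ybar (Ym t j) - util τ π₀ (c j) (y t j) (Ym t j))}) :
    ∀ j, Filter.Tendsto (fun T : ℕ => Reg j T / (T : ℝ)) Filter.atTop (nhds 0) := by
  intro j
  haveI : Nonempty (Fin J) := Fin.pos_iff_nonempty.mp (by omega)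
  set g : (Fin N → ℝ) × (Fin N → ℝ) → ℝ :=
    fun p => util τ π₀ (c j) p.1 p.2 with hg
  have hgc : Continuous g := continuous_util hN π₀ (c j) τ
  -- coordinate bounds from `a`
  have hak : ∀ t k i, |y t k i - ystar k i| ≤ a t := by
    intro t k i
    rw [ha]
    refine le_trans (abs_le_sqrt_sum_sq (fun i => y t k i - ystar k i) i) ?_
    exact le_ciSup (f := fun k => Real.sqrt (∑ i, (y t k i - ystar k i) ^ 2))
      (Set.Finite.bddAbove (Set.finite_range _)) k
  -- coordinatewise convergence of iterates
  have hyc : ∀ k, Filter.Tendsto (fun t => y t k) Filter.atTop (nhds (ystar k)) := by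
    intro k
    rw [tendsto_pi_nhds]
    intro i
    have h0 : Filter.Tendsto (fun t => y t k i - ystar k i) Filter.atTop (nhds 0) :=
      squeeze_zero_norm (fun t => by simpa using hak t k i) hconv
    have := h0.add_const (ystar k i)
    simpa using this
  set Zs : Fin N → ℝ := ∑ k ∈ Finset.univ.erase j, ystar k with hZs
  have hYc : Filter.Tendsto (fun t => Ym t j) Filter.atTop (nhds Zs) := by
    have h0 : Filter.Tendsto (fun t => ∑ k ∈ Finset.univ.erase j, y t k)
        Filter.atTop (nhds (∑ k ∈ Finset.univ.erase j, ystar k)) :=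
      tendsto_finset_sum _ (fun k _ => hyc k)
    simpa [hYm, hZs] using h0
  -- compact sets
  set B : Set (Fin N → ℝ) := Set.univ.pi (fun i => Set.Icc 0 (c j i)) with hB
  set M : Fin N → ℝ := fun i => ∑ k, c k i with hM
  set Z : Set (Fin N → ℝ) := Set.univ.pi (fun i => Set.Icc 0 (M i)) with hZ
  have hKc : IsCompact (B ×ˢ Z) :=
    (isCompact_univ_pi (fun i => isCompact_Icc)).prod
      (isCompact_univ_pi (fun i => isCompact_Icc))
  have hmemB : ∀ v : Fin N → ℝ, (∀ i, 0 ≤ v i ∧ v i ≤ c j i) → v ∈ B := by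
    intro v hv i _
    exact ⟨(hv i).1, (hv i).2⟩
  have hymem : ∀ t, y t j ∈ B := fun t => hmemB _ (fun i => hybox t j i)
  have hYmem : ∀ t, Ym t j ∈ Z := by
    intro t i _
    rw [hYm]
    constructor
    · simp only [Finset.sum_apply]
      exact Finset.sum_nonneg (fun k _ => (hybox t k i).1)
    · simp only [Finset.sum_apply]
      calc ∑ k ∈ Finset.univ.erase j, y t k i
          ≤ ∑ k ∈ Finset.univ.erase j, c k i :=
            Finset.sum_le_sum (fun k _ => (hybox t k i).2)
        _ ≤ ∑ k, c k i :=
            Finset.sum_le_sum_of_subset_of_nonneg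
              (Finset.erase_subset _ _) (fun k _ _ => hc0 k i)
        _ = M i := rfl
  obtain ⟨C, hC⟩ := hKc.exists_bound_of_continuousOn hgc.continuousOn
  -- per-round regret sets and suprema
  set S : ℕ → Set ℝ := fun t => {v | ∃ ybar : Fin N → ℝ,
      (∀ i, 0 ≤ ybar i ∧ ybar i ≤ c j i) ∧
      v = g (ybar, Ym t j) - g (y t j, Ym t j)} with hS
  have hSmem0 : ∀ t, (0 : ℝ) ∈ S t := fun t => ⟨y t j, fun i => hybox t j i, by simp⟩
  have hSbdd : ∀ t, BddAbove (S t) := by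
    intro t
    refine ⟨2 * C, ?_⟩
    rintro v ⟨yb, hyb, rfl⟩
    have h1 := hC (yb, Ym t j) ⟨hmemB _ hyb, hYmem t⟩
    have h2 := hC (y t j, Ym t j) ⟨hymem t, hYmem t⟩
    rw [Real.norm_eq_abs] at h1 h2
    have h1' := abs_le.mp h1
    have h2' := abs_le.mp h2
    linarith [h1'.2, h2'.1]
  set E : ℕ → ℝ := fun t => sSup (S t) with hE
  have hE0 : ∀ t, 0 ≤ E t := fun t => le_csSup (hSbdd t) (hSmem0 t)
  -- E tends to 0
  have hEconv : Filter.Tendsto E Filter.atTop (nhds 0) := by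
    rw [Metric.tendsto_atTop]
    intro ε hε
    obtain ⟨δ, hδ, hUC⟩ := (Metric.uniformContinuousOn_iff.mp
      (hKc.uniformContinuousOn_of_continuous hgc.continuousOn)) (ε/4) (by linarith)
    have hdist : Filter.Tendsto (fun t => dist (Ym t j) (Ym (t-1) j))
        Filter.atTop (nhds 0) := by
      have h2 : Filter.Tendsto (fun t => Ym (t-1) j) Filter.atTop (nhds Zs) :=
        hYc.comp (Filter.tendsto_sub_atTop_nat 1)
      simpa using hYc.dist h2
    obtain ⟨N₀, hN₀⟩ := (Metric.tendsto_atTop.mp hdist) δ hδ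
    refine ⟨max N₀ 1, fun t ht => ?_⟩
    have ht1 : 1 ≤ t := le_trans (le_max_right _ _) ht
    have htN : N₀ ≤ t := le_trans (le_max_left _ _) ht
    have hd : dist (Ym t j) (Ym (t-1) j) < δ := by
      have := hN₀ t htN
      rwa [Real.dist_eq, sub_zero, abs_of_nonneg dist_nonneg] at this
    have key : ∀ v ∈ S t, v ≤ ε/4 + ε/4 := by
      rintro v ⟨yb, hyb, rfl⟩
      have hbd : g (yb, Ym (t-1) j) ≤ g (y t j, Ym (t-1) j) := hbr t ht1 j yb hyb
      have hp1 : dist ((yb, Ym t j) : (Fin N → ℝ) × (Fin N → ℝ)) (yb, Ym (t-1) j) < δ := by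
        rw [Prod.dist_eq]
        simpa [dist_self, max_eq_right dist_nonneg] using hd
      have hp2 : dist ((y t j, Ym (t-1) j) : (Fin N → ℝ) × (Fin N → ℝ))
          (y t j, Ym t j) < δ := by
        rw [Prod.dist_eq]
        simpa [dist_self, max_eq_right dist_nonneg, dist_comm] using hd
      have e1 := hUC _ ⟨hmemB _ hyb, hYmem t⟩ _ ⟨hmemB _ hyb, hYmem (t-1)⟩ hp1
      have e2 := hUC _ ⟨hymem t, hYmem (t-1)⟩ _ ⟨hymem t, hYmem t⟩ hp2
      rw [Real.dist_eq] at e1 e2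
      have b1 : g (yb, Ym t j) - g (yb, Ym (t-1) j) ≤ ε/4 :=
        le_of_lt (lt_of_le_of_lt (le_abs_self _) e1)
      have b2 : g (y t j, Ym (t-1) j) - g (y t j, Ym t j) ≤ ε/4 :=
        le_of_lt (lt_of_le_of_lt (le_abs_self _) e2)
      linarith
    have hEle : E t ≤ ε/2 :=
      Real.sSup_le (fun v hv => by linarith [key v hv]) (by linarith)
    rw [Real.dist_eq, sub_zero, abs_of_nonneg (hE0 t)]
    linarith
  -- D tends to 0
  set D : ℕ → ℝ := fun t => g (ystar j, Ym t j) - g (y t j, Ym t j) with hD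
  have hDconv : Filter.Tendsto D Filter.atTop (nhds 0) := by
    have h1 : Filter.Tendsto (fun t => g (ystar j, Ym t j)) Filter.atTop
        (nhds (g (ystar j, Zs))) :=
      (hgc.tendsto _).comp (tendsto_const_nhds.prodMk_nhds hYc)
    have h2 : Filter.Tendsto (fun t => g (y t j, Ym t j)) Filter.atTop
        (nhds (g (ystar j, Zs))) :=
      (hgc.tendsto _).comp ((hyc j).prodMk_nhds hYc)
    simpa using h1.sub h2
  -- regret bounds
  have hRegUB : ∀ T, Reg j T ≤ ∑ t ∈ Finset.Icc 1 T, E t := by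
    intro T
    rw [hReg]
    refine Real.sSup_le ?_ (Finset.sum_nonneg fun t _ => hE0 t)
    rintro v ⟨yb, hyb, rfl⟩
    exact Finset.sum_le_sum fun t _ => le_csSup (hSbdd t) ⟨yb, hyb, by simp [hg]⟩
  have hRegLB : ∀ T, ∑ t ∈ Finset.Icc 1 T, D t ≤ Reg j T := by
    intro T
    rw [hReg]
    apply le_csSup
    · refine ⟨∑ t ∈ Finset.Icc 1 T, E t, ?_⟩
      rintro v ⟨yb, hyb, rfl⟩
      exact Finset.sum_le_sum fun t _ => le_csSup (hSbdd t) ⟨yb, hyb, by simp [hg]⟩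
    · exact ⟨ystar j, hystar j, by simp [hD, hg]⟩
  -- squeeze
  refine tendsto_of_tendsto_of_tendsto_of_le_of_le' (cesaro_Icc hDconv)
    (cesaro_Icc hEconv) ?_ ?_
  · filter_upwards [Filter.eventually_ge_atTop 1] with T hT
    have hTpos : (0 : ℝ) < T := by exact_mod_cast hT
    exact div_le_div_of_nonneg_right (hRegLB T) hTpos.le
  · filter_upwards [Filter.eventually_ge_atTop 1] with T hT
    have hTpos : (0 : ℝ) < T := by exact_mod_cast hT
    exact div_le_div_of_nonneg_right (hRegUB T) hTpos.le
end

section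
/- Under the setup of the regret bound (N ≥ 1, J ≥ 2, τ > 0, π₀ interior to the simplex, c^j ≥ 0 with ‖c^j‖₂ ≤ R, f_j(y; z) = ⟨softmax(log π₀ + (z+y)/τ), c^j − y⟩, exact best-response iterates y^{j,(t)} ∈ [0, c^j] with f_j(y^{j,(t)}; Y^{-j,(t−1)}) ≥ f_j(ȳ; Y^{-j,(t−1)}) for all ȳ ∈ [0, c^j], where Y^{-j,(t)} = Σ_{k≠j} y^{k,(t)}, and a_t = max_{j∈[J]} ‖y^{j,(t)} − y^{j*}‖₂ for fixed y^{j*} ∈ [0, c^j]), suppose moreover that there exist C ≥ 0 and κ ∈ (0,1) with a_t ≤ C·κ^t for all t ≥ 0. Then for every j ∈ [J] and every T ≥ 1, the regret R_j(T) = sup_{ȳ∈[0,c^j]} Σ_{t=1}^T [f_j(ȳ; Y^{-j,(t)}) − f_j(y^{j,(t)}; Y^{-j,(t)})] satisfies R_j(T) ≤ 4·(R/τ + 1)·(J−1)·C/(1−κ); in particular the regret is bounded uniformly in T. -/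
open Finset

/-!
A best response to the opponents' previous profile is almost a best response to their current
one: the utility is a softmax-weighted mean of `c - y`, and tilting the logits by `d` moves such a
mean by at most `‖c - y‖_∞ · ‖d‖_∞`, since its derivative along the tilt is a covariance. The
opponents' aggregate moves by at most `(J - 1)(a_t + a_{t-1}) ≤ 2(J - 1)Cκ^{t-1}` between rounds,
so the per-round regret is `O(κ^{t-1})` and the regret is bounded by a geometric series.
-/

open Real

section ExpMean

variable {ι : Type*} [Fintype ι]

noncomputable def expMean (u w : ι → ℝ) : ℝ :=
  (∑ i, exp (u i) * w i) / ∑ i, exp (u i)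

variable [Nonempty ι]

lemma sum_exp_pos_s16 (u : ι → ℝ) : 0 < ∑ i, exp (u i) :=
  sum_pos (fun i _ => exp_pos (u i)) univ_nonempty

lemma expMean_le {u w : ι → ℝ} {B : ℝ} (hw : ∀ i, w i ≤ B) : expMean u w ≤ B := by
  rw [expMean, div_le_iff₀ (sum_exp_pos_s16 u), mul_sum]
  exact sum_le_sum fun i _ => by
    rw [mul_comm B]; exact mul_le_mul_of_nonneg_left (hw i) (exp_pos _).le

lemma le_expMean {u w : ι → ℝ} {B : ℝ} (hw : ∀ i, B ≤ w i) : B ≤ expMean u w := by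
  rw [expMean, le_div_iff₀ (sum_exp_pos_s16 u), mul_sum]
  exact sum_le_sum fun i _ => by
    rw [mul_comm B]; exact mul_le_mul_of_nonneg_left (hw i) (exp_pos _).le

lemma abs_expMean_le {u w : ι → ℝ} {B : ℝ} (hw : ∀ i, |w i| ≤ B) : |expMean u w| ≤ B :=
  abs_le.2 ⟨le_expMean fun i => (abs_le.1 (hw i)).1, expMean_le fun i => (abs_le.1 (hw i)).2⟩

lemma hasDerivAt_expMean_add_mul (u d w : ι → ℝ) (s : ℝ) :
    HasDerivAt (fun s => expMean (fun i => u i + s * d i) w)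
      (expMean (fun i => u i + s * d i)
        (fun i => d i * (w i - expMean (fun i => u i + s * d i) w))) s := by
  have hexp : ∀ i, HasDerivAt (fun s => exp (u i + s * d i)) (exp (u i + s * d i) * d i) s :=
    fun i => by simpa using (((hasDerivAt_id s).mul_const (d i)).const_add (u i)).exp
  have hS := HasDerivAt.fun_sum (u := univ) fun i _ => hexp i
  have hN := HasDerivAt.fun_sum (u := univ) fun i _ => (hexp i).mul_const (w i)
  refine (hN.div hS (sum_exp_pos_s16 _).ne').congr_deriv ?_
  have hsum : ∑ i, exp (u i + s * d i) * (d i * (w i - expMean (fun i => u i + s * d i) w))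
      = ∑ i, exp (u i + s * d i) * d i * w i
        - expMean (fun i => u i + s * d i) w * ∑ i, exp (u i + s * d i) * d i := by
    rw [mul_sum, ← sum_sub_distrib]
    exact sum_congr rfl fun i _ => by ring
  have hS0 := (sum_exp_pos_s16 (fun i => u i + s * d i)).ne'
  rw [expMean, hsum, expMean]
  field_simp

lemma abs_expMean_add_sub_le {u d w : ι → ℝ} {R D : ℝ} (hw0 : ∀ i, 0 ≤ w i)
    (hwR : ∀ i, w i ≤ R) (hd : ∀ i, |d i| ≤ D) :
    |expMean (fun i => u i + d i) w - expMean u w| ≤ R * D := by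
  have hcov : ∀ s, |expMean (fun i => u i + s * d i)
      (fun i => d i * (w i - expMean (fun i => u i + s * d i) w))| ≤ R * D := by
    intro s
    refine abs_expMean_le fun i => ?_
    have hM0 : 0 ≤ expMean (fun i => u i + s * d i) w := le_expMean hw0
    have hMR : expMean (fun i => u i + s * d i) w ≤ R := expMean_le hwR
    rw [abs_mul, mul_comm R]
    exact mul_le_mul (hd i) (abs_sub_le_iff.2 ⟨by linarith [hwR i], by linarith [hw0 i]⟩)
      (abs_nonneg _) ((abs_nonneg _).trans (hd i))
  simpa using norm_image_sub_le_of_norm_deriv_le_segment_01'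
    (fun s _ => (hasDerivAt_expMean_add_mul u d w s).hasDerivWithinAt) (fun s _ => hcov s)

end ExpMean

lemma sum_softmax_mul {N : ℕ} (u w : Fin N → ℝ) : ∑ i, softmax u i * w i = expMean u w := by
  rw [expMean, sum_div]
  exact sum_congr rfl fun i _ => div_mul_eq_mul_div _ _ _

lemma abs_util_sub_le {N : ℕ} [NeZero N] {τ : ℝ} (hτ : 0 < τ) (π₀ c y z z' : Fin N → ℝ)
    {R D : ℝ} (hy0 : ∀ i, 0 ≤ c i - y i) (hyR : ∀ i, c i - y i ≤ R) (hz : ∀ i, |z i - z' i| ≤ D) :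
    |util τ π₀ c y z - util τ π₀ c y z'| ≤ R * (D / τ) := by
  have hd : ∀ i, |(z i - z' i) / τ| ≤ D / τ := fun i => by
    rw [abs_div, abs_of_pos hτ]; exact div_le_div_of_nonneg_right (hz i) hτ.le
  have hshift : (fun i => Real.log (π₀ i) + (z i + y i) / τ)
      = fun i => (Real.log (π₀ i) + (z' i + y i) / τ) + (z i - z' i) / τ := by
    funext i; ring
  simp only [util, sum_softmax_mul, hshift]
  exact abs_expMean_add_sub_le hy0 hyR hd

lemma util_sub_le_of_util_le {N : ℕ} [NeZero N] {τ : ℝ} (hτ : 0 < τ) (π₀ c : Fin N → ℝ)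
    {y ybar z z' : Fin N → ℝ} {R D : ℝ} (hybar : ∀ i, 0 ≤ ybar i ∧ ybar i ≤ c i)
    (hy : ∀ i, 0 ≤ y i ∧ y i ≤ c i) (hcR : ∀ i, c i ≤ R)
    (hbest : util τ π₀ c ybar z' ≤ util τ π₀ c y z') (hz : ∀ i, |z i - z' i| ≤ D) :
    util τ π₀ c ybar z - util τ π₀ c y z ≤ 2 * (R * (D / τ)) := by
  have hybar' := abs_util_sub_le (R := R) hτ π₀ c ybar z z' (fun i => by linarith [hybar i])
    (fun i => by linarith [hybar i, hcR i]) hz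
  have hy' := abs_util_sub_le (R := R) hτ π₀ c y z z' (fun i => by linarith [hy i])
    (fun i => by linarith [hy i, hcR i]) hz
  linarith [abs_le.1 hybar', abs_le.1 hy']

lemma abs_le_sqrt_sum_sq_s16 {ι : Type*} [Fintype ι] (x : ι → ℝ) (i : ι) :
    |x i| ≤ √(∑ j, x j ^ 2) :=
  Real.abs_le_sqrt (single_le_sum (fun j _ => sq_nonneg (x j)) (mem_univ i))

lemma abs_le_iSup_sqrt_sum_sq {ι κ : Type*} [Fintype ι] [Finite κ] (x : κ → ι → ℝ) (k : κ)
    (i : ι) : |x k i| ≤ ⨆ k, √(∑ i, x k i ^ 2) :=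
  (abs_le_sqrt_sum_sq_s16 (x k) i).trans
    (le_ciSup (f := fun k => √(∑ i, x k i ^ 2)) (Set.finite_range _).bddAbove k)

lemma abs_sum_sub_sum_le {α : Type*} (s : Finset α) {f g h : α → ℝ} {A B : ℝ}
    (hf : ∀ k ∈ s, |f k - h k| ≤ A) (hg : ∀ k ∈ s, |g k - h k| ≤ B) :
    |∑ k ∈ s, f k - ∑ k ∈ s, g k| ≤ s.card * (A + B) := by
  rw [← sum_sub_distrib, ← nsmul_eq_mul]
  refine (abs_sum_le_sum_abs _ _).trans (sum_le_card_nsmul _ _ _ fun k hk => ?_)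
  calc |f k - g k| = |(f k - h k) - (g k - h k)| := by ring_nf
    _ ≤ |f k - h k| + |g k - h k| := abs_sub _ _
    _ ≤ A + B := add_le_add (hf k hk) (hg k hk)

lemma abs_sum_erase_sub_sum_erase_le {J N : ℕ} (j : Fin J) {x x' x₀ : Fin J → Fin N → ℝ}
    {A B : ℝ} (hx : ∀ k i, |x k i - x₀ k i| ≤ A) (hx' : ∀ k i, |x' k i - x₀ k i| ≤ B)
    (i : Fin N) :
    |(∑ k ∈ univ.erase j, x k) i - (∑ k ∈ univ.erase j, x' k) i| ≤ (J - 1) * (A + B) := by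
  have hcard : ((univ.erase j).card : ℝ) = J - 1 := by
    rw [card_erase_of_mem (mem_univ j), card_univ, Fintype.card_fin, Nat.cast_pred j.pos]
  simp only [Finset.sum_apply]
  exact hcard ▸ abs_sum_sub_sum_le _ (fun k _ => hx k i) (fun k _ => hx' k i)

lemma sum_Icc_le_of_le_mul_pow {f : ℕ → ℝ} {b κ : ℝ} (hb : 0 ≤ b) (hκ0 : 0 ≤ κ) (hκ1 : κ < 1)
    (T : ℕ) (hf : ∀ t ∈ Icc 1 T, f t ≤ b * κ ^ (t - 1)) :
    ∑ t ∈ Icc 1 T, f t ≤ b / (1 - κ) := by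
  have hreindex : ∑ t ∈ Icc 1 T, κ ^ (t - 1) = ∑ t ∈ Ico 0 T, κ ^ t := by
    rw [← Ico_add_one_right_eq_Icc, sum_Ico_eq_sum_range, ← range_eq_Ico]
    simp
  calc ∑ t ∈ Icc 1 T, f t ≤ b * ∑ t ∈ Ico 0 T, κ ^ t := by
        rw [← hreindex, mul_sum]; exact sum_le_sum hf
    _ ≤ b * (1 / (1 - κ)) := by
        gcongr; simpa using geom_sum_Ico_le_of_lt_one (m := 0) (n := T) hκ0 hκ1
    _ = b / (1 - κ) := mul_one_div b (1 - κ)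

theorem stmt_16_general (N J : ℕ) (hN : 1 ≤ N) (τ : ℝ) (hτ : 0 < τ)
    (π₀ : Fin N → ℝ)
    (c : Fin J → Fin N → ℝ) (R : ℝ)
    (hcR : ∀ j, Real.sqrt (∑ i, (c j i) ^ 2) ≤ R)
    (y : ℕ → Fin J → Fin N → ℝ)
    (hybox : ∀ t j i, 0 ≤ y t j i ∧ y t j i ≤ c j i)
    (Ym : ℕ → Fin J → Fin N → ℝ)
    (hYm : ∀ t j, Ym t j = ∑ k ∈ Finset.univ.erase j, y t k)
    (hbr : ∀ t : ℕ, 1 ≤ t → ∀ j, ∀ ybar : Fin N → ℝ,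
      (∀ i, 0 ≤ ybar i ∧ ybar i ≤ c j i) →
      util τ π₀ (c j) ybar (Ym (t - 1) j) ≤ util τ π₀ (c j) (y t j) (Ym (t - 1) j))
    (ystar : Fin J → Fin N → ℝ)
    (a : ℕ → ℝ)
    (ha : ∀ t, a t = ⨆ j, Real.sqrt (∑ i, (y t j i - ystar j i) ^ 2))
    (C κ : ℝ) (hC : 0 ≤ C) (hκ0 : 0 < κ) (hκ1 : κ < 1)
    (hgeo : ∀ t, a t ≤ C * κ ^ t)
    (Reg : Fin J → ℕ → ℝ)
    (hReg : ∀ j T, Reg j T = sSup {v : ℝ | ∃ ybar : Fin N → ℝ,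
      (∀ i, 0 ≤ ybar i ∧ ybar i ≤ c j i) ∧
      v = ∑ t ∈ Finset.Icc 1 T,
        (util τ π₀ (c j) ybar (Ym t j) - util τ π₀ (c j) (y t j) (Ym t j))}) :
    ∀ j, ∀ T : ℕ, 1 ≤ T →
      Reg j T ≤ 4 * (R / τ + 1) * ((J : ℝ) - 1) * C / (1 - κ) := by
  intro j T _
  have : NeZero N := ⟨by omega⟩
  have hR : 0 ≤ R := (Real.sqrt_nonneg _).trans (hcR j)
  have hcjR : ∀ i, c j i ≤ R := fun i =>
    (le_abs_self _).trans ((abs_le_sqrt_sum_sq_s16 (c j) i).trans (hcR j))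
  have hJ : (0 : ℝ) ≤ J - 1 := sub_nonneg.2 (Nat.one_le_cast.2 j.pos)
  have hdev : ∀ t k i, |y t k i - ystar k i| ≤ C * κ ^ t := fun t k i =>
    (abs_le_iSup_sqrt_sum_sq (fun k i => y t k i - ystar k i) k i).trans (ha t ▸ hgeo t)
  have hpow : ∀ t, C * κ ^ t ≤ C * κ ^ (t - 1) := fun t =>
    mul_le_mul_of_nonneg_left (pow_le_pow_of_le_one hκ0.le hκ1.le (Nat.sub_le t 1)) hC
  have hYm_sub : ∀ t i,
      |Ym t j i - Ym (t - 1) j i| ≤ (J - 1) * (C * κ ^ (t - 1) + C * κ ^ (t - 1)) := fun t i =>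
    hYm t j ▸ hYm (t - 1) j ▸ abs_sum_erase_sub_sum_erase_le j
      (fun k i => (hdev t k i).trans (hpow t)) (hdev (t - 1)) i
  rw [hReg]
  refine Real.sSup_le ?_ (by positivity)
  rintro _ ⟨ybar, hybar, rfl⟩
  refine (sum_Icc_le_of_le_mul_pow (b := 4 * (R / τ) * (J - 1) * C) (by positivity) hκ0.le hκ1 T
    fun t ht => ?_).trans (div_le_div_of_nonneg_right (by gcongr; linarith) (sub_pos.2 hκ1).le)
  exact (util_sub_le_of_util_le hτ π₀ (c j) hybar (hybox t j) hcjR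
    (hbr t (mem_Icc.1 ht).1 j ybar hybar) (hYm_sub t)).trans_eq (by ring)

/-- Linear (geometric-convergence) regime: if `a_t ≤ C·κ^t` with `κ ∈ (0,1)`,
then each principal's regret is bounded uniformly in `T` by
`4(R/τ+1)(J−1)C/(1−κ)`. -/
theorem stmt_16 (N J : ℕ) (hN : 1 ≤ N) (hJ : 2 ≤ J) (τ : ℝ) (hτ : 0 < τ)
    (π₀ : Fin N → ℝ) (hπ₀pos : ∀ i, 0 < π₀ i) (hπ₀sum : ∑ i, π₀ i = 1)
    (c : Fin J → Fin N → ℝ) (R : ℝ)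
    (hc0 : ∀ j i, 0 ≤ c j i) (hcR : ∀ j, Real.sqrt (∑ i, (c j i) ^ 2) ≤ R)
    (y : ℕ → Fin J → Fin N → ℝ)
    (hybox : ∀ t j i, 0 ≤ y t j i ∧ y t j i ≤ c j i)
    (Ym : ℕ → Fin J → Fin N → ℝ)
    (hYm : ∀ t j, Ym t j = ∑ k ∈ Finset.univ.erase j, y t k)
    (hbr : ∀ t : ℕ, 1 ≤ t → ∀ j, ∀ ybar : Fin N → ℝ,
      (∀ i, 0 ≤ ybar i ∧ ybar i ≤ c j i) →
      util τ π₀ (c j) ybar (Ym (t - 1) j) ≤ util τ π₀ (c j) (y t j) (Ym (t - 1) j))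
    (ystar : Fin J → Fin N → ℝ)
    (hystar : ∀ j i, 0 ≤ ystar j i ∧ ystar j i ≤ c j i)
    (a : ℕ → ℝ)
    (ha : ∀ t, a t = ⨆ j, Real.sqrt (∑ i, (y t j i - ystar j i) ^ 2))
    (C κ : ℝ) (hC : 0 ≤ C) (hκ0 : 0 < κ) (hκ1 : κ < 1)
    (hgeo : ∀ t, a t ≤ C * κ ^ t)
    (Reg : Fin J → ℕ → ℝ)
    (hReg : ∀ j T, Reg j T = sSup {v : ℝ | ∃ ybar : Fin N → ℝ,
      (∀ i, 0 ≤ ybar i ∧ ybar i ≤ c j i) ∧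
      v = ∑ t ∈ Finset.Icc 1 T,
        (util τ π₀ (c j) ybar (Ym t j) - util τ π₀ (c j) (y t j) (Ym t j))}) :
    ∀ j, ∀ T : ℕ, 1 ≤ T →
      Reg j T ≤ 4 * (R / τ + 1) * ((J : ℝ) - 1) * C / (1 - κ) :=
  stmt_16_general N J hN τ hτ π₀ c R hcR y hybox Ym hYm hbr ystar a ha C κ hC hκ0 hκ1 hgeo Reg hReg
end
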